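/- arXiv:2011.01988 — 12 statements merged into one kernel-verified Lean document; each statement's English description precedes it below -/
import Mathlib

section
/- Let A, B, C be pairwise distinct points on the circle of center O and radius R > 0 in the Euclidean plane, with midpoint(B,C) ≠ O and midpoint(A,B) ≠ O. Set A' = inversion O R (midpoint(B,C)) and C' = inversion O R (midpoint(A,B)) (the inverses of the side midpoints with respect to the circle). Then A', B, C' are collinear, and the line through A' and C' is tangent to the circle at B; precisely, ⟪A' − B, O − B⟫ = 0 and ⟪C' − B, O − B⟫ = 0. -/
open EuclideanGeometry
open scoped InnerProductSpace

private lemma inversion_midpoint_inner_key (O B X : EuclideanSpace ℝ (Fin 2)) (R : ℝ)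
    (hB : dist O B = R) (hX : dist O X = R) (hm : midpoint ℝ B X ≠ O) :
    ⟪inversion O R (midpoint ℝ B X) - B, O - B⟫_ℝ = 0 := by
  have hd : dist (midpoint ℝ B X) O ≠ 0 := dist_ne_zero.2 hm
  rw [inversion, vsub_eq_sub, vadd_eq_add]
  set u := O - B with hu
  set v := O - X with hv
  set d := dist (midpoint ℝ B X) O with hdd
  have h1 : ⟪u, u⟫_ℝ = R ^ 2 := by
    rw [real_inner_self_eq_norm_sq, ← dist_eq_norm, hB]
  have h2 : ⟪v, v⟫_ℝ = R ^ 2 := by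
    rw [real_inner_self_eq_norm_sq, ← dist_eq_norm, hX]
  have hmO : midpoint ℝ B X - O = (-(1/2) : ℝ) • (u + v) := by
    rw [hu, hv, midpoint_eq_smul_add, invOf_eq_inv]
    module
  set t := ⟪v, u⟫_ℝ with ht
  have hd2 : d ^ 2 = (R ^ 2 + t) / 2 := by
    rw [hdd, dist_eq_norm, ← real_inner_self_eq_norm_sq, hmO]
    rw [real_inner_smul_left, real_inner_smul_right, inner_add_left, inner_add_right,
      inner_add_right, h1, h2, ht, real_inner_comm v u]
    ring
  have hrw : ((R / d) ^ 2 • (midpoint ℝ B X - O) + O - B : EuclideanSpace ℝ (Fin 2))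
      = (R / d) ^ 2 • ((-(1/2) : ℝ) • (u + v)) + u := by
    rw [← hmO, hu]; abel
  rw [hrw, inner_add_left, real_inner_smul_left, real_inner_smul_left, inner_add_left,
    h1, ← ht]
  have : R ^ 2 + t = 2 * d ^ 2 := by rw [hd2]; ring
  rw [div_pow]
  field_simp
  nlinarith [this]

/-- If `A, B, C` are pairwise distinct points on the circle of center `O` and radius `R`,
with the midpoints of `BC` and of `AB` distinct from `O`, and `A'`, `C'` are the inverses of
these midpoints with respect to the circle, then `A'`, `B`, `C'` are collinear and the line
through them is tangent to the circle at `B`. -/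
theorem inverses_of_midpoints_tangent_line
    (O A B C : EuclideanSpace ℝ (Fin 2)) (R : ℝ) (hR : 0 < R)
    (hAB : A ≠ B) (hBC : B ≠ C) (hAC : A ≠ C)
    (hA : dist O A = R) (hB : dist O B = R) (hC : dist O C = R)
    (hmBC : midpoint ℝ B C ≠ O) (hmAB : midpoint ℝ A B ≠ O)
    (A' C' : EuclideanSpace ℝ (Fin 2))
    (hA' : A' = EuclideanGeometry.inversion O R (midpoint ℝ B C))
    (hC' : C' = EuclideanGeometry.inversion O R (midpoint ℝ A B)) :
    Collinear ℝ ({A', B, C'} : Set (EuclideanSpace ℝ (Fin 2))) ∧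
      ⟪A' - B, O - B⟫_ℝ = 0 ∧ ⟪C' - B, O - B⟫_ℝ = 0 := by
  have hA'0 : ⟪A' - B, O - B⟫_ℝ = 0 := by
    rw [hA']; exact inversion_midpoint_inner_key O B C R hB hC hmBC
  have hC'0 : ⟪C' - B, O - B⟫_ℝ = 0 := by
    rw [hC', midpoint_comm]
    exact inversion_midpoint_inner_key O B A R hB hA (by rwa [midpoint_comm])
  refine ⟨?_, hA'0, hC'0⟩
  -- collinearity
  have hw : (O - B : EuclideanSpace ℝ (Fin 2)) ≠ 0 := by
    intro h
    rw [sub_eq_zero] at h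
    have : dist O B = 0 := by rw [h, dist_self]
    rw [hB] at this; exact hR.ne' this
  set K := (ℝ ∙ (O - B) : Submodule ℝ (EuclideanSpace ℝ (Fin 2)))ᗮ with hK
  have hfr : Module.finrank ℝ K = 1 := by
    have h1 := Submodule.finrank_add_finrank_orthogonal
      (ℝ ∙ (O - B) : Submodule ℝ (EuclideanSpace ℝ (Fin 2)))
    rw [finrank_span_singleton hw, finrank_euclideanSpace_fin] at h1
    rw [hK]
    omega
  have hmem : ∀ p ∈ ({A', B, C'} : Set (EuclideanSpace ℝ (Fin 2))), p - B ∈ K := by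
    intro p hp
    rcases hp with rfl | rfl | rfl
    · exact Submodule.mem_orthogonal_singleton_iff_inner_left.2 hA'0
    · simp
    · exact Submodule.mem_orthogonal_singleton_iff_inner_left.2 hC'0
  rw [collinear_iff_rank_le_one]
  have hle : vectorSpan ℝ ({A', B, C'} : Set (EuclideanSpace ℝ (Fin 2))) ≤ K := by
    rw [vectorSpan_def, Submodule.span_le]
    rintro x ⟨p, hp, q, hq, rfl⟩
    show p - q ∈ K
    have h : p - q = (p - B) - (q - B) := by abel
    rw [h]
    exact Submodule.sub_mem K (hmem p hp) (hmem q hq)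
  calc Module.rank ℝ (vectorSpan ℝ ({A', B, C'} : Set (EuclideanSpace ℝ (Fin 2))))
      ≤ Module.rank ℝ K := Submodule.rank_mono hle
    _ = 1 := Module.rank_eq_one_iff_finrank_eq_one.2 hfr
end

section
/- Let ABC be a nondegenerate triangle in the Euclidean plane with circumcenter O, circumradius R, orthocenter H, and nine-point center N = midpoint(O,H). Then the three midpoints of the sides lie at distance R/2 from N: dist(N, midpoint(A,B)) = dist(N, midpoint(B,C)) = dist(N, midpoint(C,A)) = R/2. In particular, the radius of the Euler circle is half the circumradius. -/
open EuclideanGeometry Real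

open Finset in
/-- The three side midpoints of a nondegenerate triangle lie at distance `R/2` from the
nine-point center `N = midpoint(O, H)`: the radius of the Euler circle is half the
circumradius. -/
theorem euler_circle_radius_eq_half_circumradius
    (A B C : EuclideanSpace ℝ (Fin 2)) (h : AffineIndependent ℝ ![A, B, C]) :
    let T : Affine.Triangle ℝ (EuclideanSpace ℝ (Fin 2)) := ⟨![A, B, C], h⟩
    let O := T.circumcenter
    let R := T.circumradius
    let H := T.orthocenter
    let N := midpoint ℝ O H
    dist N (midpoint ℝ A B) = R / 2 ∧ dist N (midpoint ℝ B C) = R / 2 ∧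
      dist N (midpoint ℝ C A) = R / 2 := by
  intro T O R H N
  have hcent : (univ : Finset (Fin 3)).centroid ℝ ![A,B,C] -ᵥ O
      = (3:ℝ)⁻¹ • ((A -ᵥ O) + (B -ᵥ O) + (C -ᵥ O)) := by
    rw [Finset.centroid_def, Finset.affineCombination_eq_weightedVSubOfPoint_vadd_of_sum_eq_one
      _ _ _ (Finset.sum_centroidWeights_eq_one_of_nonempty ℝ _ ⟨0, mem_univ 0⟩) O, vadd_vsub]
    simp [Finset.weightedVSubOfPoint_apply, Fin.sum_univ_three, Finset.centroidWeights, smul_add]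
  have hH : H -ᵥ O = (A -ᵥ O) + (B -ᵥ O) + (C -ᵥ O) := by
    rw [show H = T.orthocenter from rfl, Affine.Triangle.orthocenter_eq_smul_vsub_vadd_circumcenter,
      vadd_vsub]
    have hT : T.points = ![A,B,C] := rfl
    rw [hT, hcent, smul_smul]
    norm_num
  have hN : ∀ X Y Z : EuclideanSpace ℝ (Fin 2),
      (X -ᵥ O) + (Y -ᵥ O) + (Z -ᵥ O) = (A -ᵥ O) + (B -ᵥ O) + (C -ᵥ O) →
      dist N (midpoint ℝ X Y) = dist Z O / 2 := by
    intro X Y Z hs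
    have hv : N -ᵥ midpoint ℝ X Y = (2:ℝ)⁻¹ • (Z -ᵥ O) := by
      have h2 : H -ᵥ O = X -ᵥ O + (Y -ᵥ O) + (Z -ᵥ O) := by rw [hs, hH]
      rw [show N = midpoint ℝ O H from rfl, midpoint_eq_smul_add, midpoint_eq_smul_add,
        invOf_eq_inv]
      simp only [vsub_eq_sub] at h2 ⊢
      linear_combination (norm := module) (2:ℝ)⁻¹ • h2
    rw [dist_eq_norm_vsub (EuclideanSpace ℝ (Fin 2)), hv, norm_smul,
      dist_eq_norm_vsub (EuclideanSpace ℝ (Fin 2))]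
    simp [div_eq_inv_mul]
  have hR : dist A O = R ∧ dist B O = R ∧ dist C O = R := by
    refine ⟨?_, ?_, ?_⟩
    · exact T.dist_circumcenter_eq_circumradius 0
    · exact T.dist_circumcenter_eq_circumradius 1
    · exact T.dist_circumcenter_eq_circumradius 2
  refine ⟨?_, ?_, ?_⟩
  · rw [hN A B C rfl, hR.2.2]
  · rw [hN B C A (by abel), hR.1]
  · rw [hN C A B (by abel), hR.2.1]
end

section
/- Let ABC be a nondegenerate triangle in the Euclidean plane with circumcenter O, circumradius R, orthocenter H, and nine-point center N = midpoint(O,H). Then the triangle is acute (all three angles ∠BAC, ∠ABC, ∠BCA are strictly less than π/2) if and only if dist(O,N) < R/2. -/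
/-!
By Sylvester's theorem `H - O = (A - O) + (B - O) + (C - O)`, so expanding the square gives
`OH² = 9R² - (a² + b² + c²)`. The law of sines `a = 2R sin A` and the identity
`sin² A + sin² B + sin² C = 2 + 2 cos A cos B cos C` (valid when `A + B + C = π`) turn this into
`OH² = R² (1 - 8 cos A cos B cos C)`. Since `ON = OH / 2`, the inequality `ON < R / 2` says that
the product of the cosines is positive, which for the angles of a triangle means all are acute.
-/

open EuclideanGeometry Real

namespace Real

theorem sin_sq_add_sin_sq_add_sin_sq_of_add_add_eq_pi {x y z : ℝ} (h : x + y + z = π) :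
    sin x ^ 2 + sin y ^ 2 + sin z ^ 2 = 2 + 2 * (cos x * cos y * cos z) := by
  obtain rfl : z = π - (x + y) := by linarith
  rw [sin_pi_sub, cos_pi_sub, sin_add, cos_add]
  linear_combination (1 + cos y ^ 2) * sin_sq_add_cos_sq x + (1 + cos x ^ 2) * sin_sq_add_cos_sq y

theorem cos_mul_cos_mul_cos_nonpos_of_pi_div_two_le {x y z : ℝ} (hy : 0 ≤ y) (hz : 0 ≤ z)
    (h : x + y + z = π) (hx : π / 2 ≤ x) : cos x * cos y * cos z ≤ 0 := by
  have hcx : cos x ≤ 0 := cos_nonpos_of_pi_div_two_le_of_le hx (by linarith [pi_pos])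
  have hcy : 0 ≤ cos y := cos_nonneg_of_mem_Icc ⟨by linarith, by linarith⟩
  have hcz : 0 ≤ cos z := cos_nonneg_of_mem_Icc ⟨by linarith, by linarith⟩
  exact mul_nonpos_of_nonpos_of_nonneg (mul_nonpos_of_nonpos_of_nonneg hcx hcy) hcz

theorem lt_pi_div_two_and_lt_and_lt_iff_cos_mul_cos_mul_cos_pos {x y z : ℝ} (hx : 0 ≤ x)
    (hy : 0 ≤ y) (hz : 0 ≤ z) (h : x + y + z = π) :
    (x < π / 2 ∧ y < π / 2 ∧ z < π / 2) ↔ 0 < cos x * cos y * cos z := by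
  refine ⟨fun ⟨hx', hy', hz'⟩ => ?_, fun hpos => ⟨?_, ?_, ?_⟩⟩
  · have := cos_pos_of_mem_Ioo ⟨by linarith [pi_pos], hx'⟩
    have := cos_pos_of_mem_Ioo ⟨by linarith [pi_pos], hy'⟩
    have := cos_pos_of_mem_Ioo ⟨by linarith [pi_pos], hz'⟩
    positivity
  all_goals by_contra! hge
  · linarith [cos_mul_cos_mul_cos_nonpos_of_pi_div_two_le hy hz h hge]
  · linarith [cos_mul_cos_mul_cos_nonpos_of_pi_div_two_le hx hz (by linarith) hge]
  · linarith [cos_mul_cos_mul_cos_nonpos_of_pi_div_two_le hx hy (by linarith) hge]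

end Real

theorem norm_add_add_sq_add_norm_sub_sq {V : Type*} [NormedAddCommGroup V]
    [InnerProductSpace ℝ V] (u v w : V) :
    ‖u + v + w‖ ^ 2 + ‖u - v‖ ^ 2 + ‖u - w‖ ^ 2 + ‖v - w‖ ^ 2
      = 3 * (‖u‖ ^ 2 + ‖v‖ ^ 2 + ‖w‖ ^ 2) := by
  simp only [norm_add_sq_real, norm_sub_sq_real, inner_add_left]
  ring

namespace Affine.Triangle

variable {V P : Type*} [NormedAddCommGroup V] [InnerProductSpace ℝ V] [MetricSpace P]
  [NormedAddTorsor V P] (t : Triangle ℝ P)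

theorem dist_circumcenter_orthocenter_sq_add_sum_dist_sq :
    dist t.circumcenter t.orthocenter ^ 2 + dist (t.points 0) (t.points 1) ^ 2
      + dist (t.points 0) (t.points 2) ^ 2 + dist (t.points 1) (t.points 2) ^ 2
      = 9 * t.circumradius ^ 2 := by
  have hR (i : Fin 3) : ‖t.points i -ᵥ t.circumcenter‖ = t.circumradius := by
    rw [← dist_eq_norm_vsub, t.dist_circumcenter_eq_circumradius]
  have hside (i j : Fin 3) : dist (t.points i) (t.points j)
      = ‖(t.points i -ᵥ t.circumcenter) - (t.points j -ᵥ t.circumcenter)‖ := by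
    rw [vsub_sub_vsub_cancel_right, dist_eq_norm_vsub]
  rw [dist_comm, dist_eq_norm_vsub, t.orthocenter_vsub_circumcenter_eq_sum_vsub,
    Fin.sum_univ_three, hside, hside, hside, norm_add_add_sq_add_norm_sub_sq, hR, hR, hR]
  ring

theorem dist_eq_two_mul_circumradius_mul_sin_angle {i₁ i₂ i₃ : Fin 3} (h₁₂ : i₁ ≠ i₂)
    (h₁₃ : i₁ ≠ i₃) (h₂₃ : i₂ ≠ i₃) :
    dist (t.points i₁) (t.points i₃)
      = 2 * t.circumradius * sin (∠ (t.points i₁) (t.points i₂) (t.points i₃)) := by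
  have hlaw := t.dist_div_sin_angle_eq_two_mul_circumradius h₁₂ h₁₃ h₂₃
  -- The library's law of sines is a quotient, junk (`x / 0 = 0`) when `sin = 0`.
  have hsin : sin (∠ (t.points i₁) (t.points i₂) (t.points i₃)) ≠ 0 := by
    intro h0
    rw [h0, div_zero] at hlaw
    linarith [t.circumradius_pos]
  rw [← hlaw, div_mul_cancel₀ _ hsin]

theorem angle_add_angle_add_angle_eq_pi :
    ∠ (t.points 1) (t.points 0) (t.points 2) + ∠ (t.points 0) (t.points 1) (t.points 2)
      + ∠ (t.points 1) (t.points 2) (t.points 0) = π := by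
  have := EuclideanGeometry.angle_add_angle_add_angle_eq_pi (t.points 2)
    (t.independent.injective.ne (by decide : (0 : Fin 3) ≠ 1))
  rw [angle_comm (t.points 2), angle_comm (t.points 0) (t.points 2)] at this
  linarith

theorem dist_circumcenter_orthocenter_sq :
    dist t.circumcenter t.orthocenter ^ 2 = t.circumradius ^ 2 * (1 - 8 *
      (cos (∠ (t.points 1) (t.points 0) (t.points 2)) *
        cos (∠ (t.points 0) (t.points 1) (t.points 2)) *
        cos (∠ (t.points 1) (t.points 2) (t.points 0)))) := by
  have hsides : dist (t.points 0) (t.points 1) ^ 2 + dist (t.points 0) (t.points 2) ^ 2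
      + dist (t.points 1) (t.points 2) ^ 2 = 4 * t.circumradius ^ 2 *
        (sin (∠ (t.points 1) (t.points 0) (t.points 2)) ^ 2
          + sin (∠ (t.points 0) (t.points 1) (t.points 2)) ^ 2
          + sin (∠ (t.points 1) (t.points 2) (t.points 0)) ^ 2) := by
    rw [dist_comm (t.points 0) (t.points 1),
      t.dist_eq_two_mul_circumradius_mul_sin_angle (i₁ := 1) (i₂ := 2) (i₃ := 0)
        (by decide) (by decide) (by decide),
      t.dist_eq_two_mul_circumradius_mul_sin_angle (i₁ := 0) (i₂ := 1) (i₃ := 2)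
        (by decide) (by decide) (by decide),
      t.dist_eq_two_mul_circumradius_mul_sin_angle (i₁ := 1) (i₂ := 0) (i₃ := 2)
        (by decide) (by decide) (by decide)]
    ring
  linear_combination t.dist_circumcenter_orthocenter_sq_add_sum_dist_sq - hsides
    - 4 * t.circumradius ^ 2 * sin_sq_add_sin_sq_add_sin_sq_of_add_add_eq_pi
      t.angle_add_angle_add_angle_eq_pi

theorem dist_circumcenter_orthocenter_lt_circumradius_iff :
    dist t.circumcenter t.orthocenter < t.circumradius ↔
      ∠ (t.points 1) (t.points 0) (t.points 2) < π / 2 ∧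
        ∠ (t.points 0) (t.points 1) (t.points 2) < π / 2 ∧
        ∠ (t.points 1) (t.points 2) (t.points 0) < π / 2 := by
  have hR := t.circumradius_pos
  rw [lt_pi_div_two_and_lt_and_lt_iff_cos_mul_cos_mul_cos_pos (angle_nonneg _ _ _)
    (angle_nonneg _ _ _) (angle_nonneg _ _ _) t.angle_add_angle_add_angle_eq_pi,
    ← pow_lt_pow_iff_left₀ dist_nonneg hR.le two_ne_zero, dist_circumcenter_orthocenter_sq,
    mul_lt_iff_lt_one_right (pow_pos hR 2), sub_lt_self_iff,
    mul_pos_iff_of_pos_left (by norm_num : (0 : ℝ) < 8)]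

end Affine.Triangle

/-- A nondegenerate triangle is acute if and only if the distance between its circumcenter
and its nine-point center is strictly less than half the circumradius. -/
theorem acute_iff_dist_circumcenter_ninePointCenter_lt
    (A B C : EuclideanSpace ℝ (Fin 2)) (h : AffineIndependent ℝ ![A, B, C]) :
    let T : Affine.Triangle ℝ (EuclideanSpace ℝ (Fin 2)) := ⟨![A, B, C], h⟩
    let O := T.circumcenter
    let R := T.circumradius
    let H := T.orthocenter
    let N := midpoint ℝ O H
    (∠ B A C < π / 2 ∧ ∠ A B C < π / 2 ∧ ∠ B C A < π / 2) ↔ dist O N < R / 2 := by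
  intro T O R H N
  have hON : dist O N = dist O H / 2 := by
    rw [dist_left_midpoint, Real.norm_two, inv_mul_eq_div]
  rw [hON, div_lt_div_iff_of_pos_right two_pos]
  exact T.dist_circumcenter_orthocenter_lt_circumradius_iff.symm
end

section
/- Let ABC be a nondegenerate triangle in the Euclidean plane with circumcenter O, circumradius R, orthocenter H, and nine-point center N = midpoint(O,H). Then the triangle is right-angled (one of the angles ∠BAC, ∠ABC, ∠BCA equals π/2) if and only if dist(O,N) = R/2; equivalently, the triangle is right-angled if and only if its Euler circle passes through its circumcenter (and then the Euler circle is internally tangent to the circumcircle). -/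
open EuclideanGeometry Real
open scoped RealInnerProductSpace

lemma gram_zero (a b c : EuclideanSpace ℝ (Fin 2)) :
    ‖a‖^2*‖b‖^2*‖c‖^2 + 2*⟪a,b⟫*⟪b,c⟫*⟪a,c⟫
      - (‖a‖^2*⟪b,c⟫^2 + ‖b‖^2*⟪a,c⟫^2 + ‖c‖^2*⟪a,b⟫^2) = 0 := by
  have hdep : ¬ LinearIndependent ℝ ![a, b, c] := by
    intro hli
    have := hli.fintype_card_le_finrank
    simp [finrank_euclideanSpace_fin] at this
  obtain ⟨g, hg, i, hi⟩ := Fintype.not_linearIndependent_iff.mp hdep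
  have hsum : g 0 • a + g 1 • b + g 2 • c = 0 := by
    rw [Fin.sum_univ_three] at hg
    simpa using hg
  have key : ∀ v : EuclideanSpace ℝ (Fin 2),
      ⟪v,a⟫ * g 0 + ⟪v,b⟫ * g 1 + ⟪v,c⟫ * g 2 = 0 := by
    intro v
    have h0 : ⟪v, g 0 • a + g 1 • b + g 2 • c⟫ = (0:ℝ) := by
      rw [hsum]; exact inner_zero_right v
    rw [inner_add_right, inner_add_right, real_inner_smul_right, real_inner_smul_right,
      real_inner_smul_right] at h0
    linarith
  set M : Matrix (Fin 3) (Fin 3) ℝ :=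
    !![⟪a,a⟫, ⟪a,b⟫, ⟪a,c⟫; ⟪a,b⟫, ⟪b,b⟫, ⟪b,c⟫; ⟪a,c⟫, ⟪b,c⟫, ⟪c,c⟫] with hM
  have hmv : M.mulVec g = 0 := by
    funext j
    fin_cases j <;>
      simp [hM, Matrix.mulVec, dotProduct, Fin.sum_univ_three, -PiLp.inner_apply]
    · linear_combination key a - g 0 * real_inner_self_eq_norm_sq a
    · linear_combination (real_inner_comm b a) * g 0 + key b - g 1 * real_inner_self_eq_norm_sq b
    · linear_combination (real_inner_comm c a) * g 0 + (real_inner_comm c b) * g 1 + key c - g 2 * real_inner_self_eq_norm_sq c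
  have hdet : M.det = 0 := by
    rw [← Matrix.exists_mulVec_eq_zero_iff]
    exact ⟨g, fun h0 => hi (by simp [h0]), hmv⟩
  rw [hM, Matrix.det_fin_three] at hdet
  simp [-PiLp.inner_apply] at hdet
  nlinarith [hdet]

private lemma poly_fwd (x y z R : ℝ)
    (hg : R^2*R^2*R^2 + 2*z*x*y - (R^2*x^2 + R^2*y^2 + R^2*z^2) = 0)
    (he : x - y - z + R^2 = 0) :
    (y + z) * ((y - R^2) * (z - R^2)) = 0 := by
  have hx : x = y + z - R^2 := by linarith
  subst hx
  linear_combination (1/2) * hg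

private lemma poly_back (x y z R : ℝ)
    (hg : R^2*R^2*R^2 + 2*z*x*y - (R^2*x^2 + R^2*y^2 + R^2*z^2) = 0)
    (he : x + y + z + R^2 = 0) :
    (y + z) * ((z + x) * (x + y)) = 0 := by
  have hx : x = -y - z - R^2 := by linarith
  subst hx
  linear_combination (-1/2) * hg

private lemma inner_expand_A (a b c : EuclideanSpace ℝ (Fin 2)) :
    ⟪b - a, c - a⟫ = ⟪b,c⟫ - ⟪a,c⟫ - ⟪a,b⟫ + ‖a‖^2 := by
  rw [inner_sub_left, inner_sub_right, inner_sub_right, real_inner_self_eq_norm_sq,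
    real_inner_comm b a]
  ring

private lemma inner_expand_B (a b c : EuclideanSpace ℝ (Fin 2)) :
    ⟪a - b, c - b⟫ = ⟪a,c⟫ - ⟪a,b⟫ - ⟪b,c⟫ + ‖b‖^2 := by
  rw [inner_sub_left, inner_sub_right, inner_sub_right, real_inner_self_eq_norm_sq]
  ring

private lemma inner_expand_C (a b c : EuclideanSpace ℝ (Fin 2)) :
    ⟪a - c, b - c⟫ = ⟪a,b⟫ - ⟪a,c⟫ - ⟪b,c⟫ + ‖c‖^2 := by
  rw [inner_sub_left, inner_sub_right, inner_sub_right, real_inner_self_eq_norm_sq,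
    real_inner_comm c b]
  ring

private lemma norm_sum_expand (a b c : EuclideanSpace ℝ (Fin 2)) :
    ‖a + b + c‖^2 = ‖a‖^2 + ‖b‖^2 + ‖c‖^2 + 2*⟪a,b⟫ + 2*⟪a,c⟫ + 2*⟪b,c⟫ := by
  have h1 := norm_add_sq_real (a + b) c
  have h2 := norm_add_sq_real a b
  rw [inner_add_left] at h1
  linarith

lemma helper_fwd (a b c : EuclideanSpace ℝ (Fin 2)) {R : ℝ}
    (ha : ‖a‖ = R) (hb : ‖b‖ = R) (hc : ‖c‖ = R)
    (hab : a ≠ b) (hac : a ≠ c) (h : ⟪b - a, c - a⟫ = 0) : ‖a + b + c‖ = R := by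
  have hR : 0 ≤ R := ha ▸ norm_nonneg a
  have hg := gram_zero a b c
  rw [ha, hb, hc] at hg
  have he : ⟪b,c⟫ - ⟪a,c⟫ - ⟪a,b⟫ + R^2 = 0 := by
    have := inner_expand_A a b c
    rw [h, ha] at this
    linarith
  have hfact := poly_fwd ⟪b,c⟫ ⟪a,c⟫ ⟪a,b⟫ R (by linarith) he
  have hzne : ⟪a,b⟫ ≠ R^2 := by
    intro hzz
    apply hab
    have h0 : ‖a - b‖^2 = 0 := by
      rw [norm_sub_sq_real, ha, hb, hzz]; ring
    have := pow_eq_zero_iff (n := 2) (by norm_num) |>.mp h0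
    exact sub_eq_zero.mp (by simpa using this)
  have hyne : ⟪a,c⟫ ≠ R^2 := by
    intro hyy
    apply hac
    have h0 : ‖a - c‖^2 = 0 := by
      rw [norm_sub_sq_real, ha, hc, hyy]; ring
    have := pow_eq_zero_iff (n := 2) (by norm_num) |>.mp h0
    exact sub_eq_zero.mp (by simpa using this)
  have hu : ⟪a,c⟫ + ⟪a,b⟫ = 0 := by
    rcases mul_eq_zero.mp hfact with h1 | h1
    · exact h1
    · rcases mul_eq_zero.mp h1 with h2 | h2
      · exact absurd (by linarith : ⟪a,c⟫ = R^2) hyne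
      · exact absurd (by linarith : ⟪a,b⟫ = R^2) hzne
  have hnormsq : ‖a + b + c‖^2 = R^2 := by
    rw [norm_sum_expand, ha, hb, hc]
    linarith
  rw [← Real.sqrt_sq (norm_nonneg (a+b+c)), hnormsq, Real.sqrt_sq hR]

lemma helper_back (a b c : EuclideanSpace ℝ (Fin 2)) {R : ℝ}
    (ha : ‖a‖ = R) (hb : ‖b‖ = R) (hc : ‖c‖ = R)
    (h : ‖a + b + c‖ = R) :
    ⟪b - a, c - a⟫ = 0 ∨ ⟪a - b, c - b⟫ = 0 ∨ ⟪a - c, b - c⟫ = 0 := by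
  have hg := gram_zero a b c
  rw [ha, hb, hc] at hg
  have hs1 : ⟪b,c⟫ + ⟪a,c⟫ + ⟪a,b⟫ + R^2 = 0 := by
    have h0 : ‖a + b + c‖^2 = R^2 := by rw [h]
    rw [norm_sum_expand, ha, hb, hc] at h0
    linarith
  have hprod := poly_back ⟪b,c⟫ ⟪a,c⟫ ⟪a,b⟫ R (by linarith) hs1
  rcases mul_eq_zero.mp hprod with h1 | h1
  · left
    rw [inner_expand_A, ha]
    linarith
  · rcases mul_eq_zero.mp h1 with h2 | h2
    · right; left
      rw [inner_expand_B, hb]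
      linarith
    · right; right
      rw [inner_expand_C, hc]
      linarith

/-- A nondegenerate triangle is right-angled if and only if the distance between its
circumcenter and its nine-point center equals half the circumradius, i.e. iff its Euler
circle passes through its circumcenter (and is then internally tangent to the
circumcircle). -/
theorem right_iff_dist_circumcenter_ninePointCenter_eq
    (A B C : EuclideanSpace ℝ (Fin 2)) (h : AffineIndependent ℝ ![A, B, C]) :
    let T : Affine.Triangle ℝ (EuclideanSpace ℝ (Fin 2)) := ⟨![A, B, C], h⟩
    let O := T.circumcenter
    let R := T.circumradius
    let H := T.orthocenter
    let N := midpoint ℝ O H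
    ((∠ B A C = π / 2 ∨ ∠ A B C = π / 2 ∨ ∠ B C A = π / 2) ↔ dist O N = R / 2) ∧
      ((∠ B A C = π / 2 ∨ ∠ A B C = π / 2 ∨ ∠ B C A = π / 2) ↔ dist N O = R / 2) := by
  intro T O R Ho N
  -- distinctness
  have hAB : A ≠ B := fun he => (by decide : (0 : Fin 3) ≠ 1) (h.injective (by simp [he]))
  have hAC : A ≠ C := fun he => (by decide : (0 : Fin 3) ≠ 2) (h.injective (by simp [he]))
  have hBC : B ≠ C := fun he => (by decide : (1 : Fin 3) ≠ 2) (h.injective (by simp [he]))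
  -- norms
  have hA : ‖A - O‖ = R := by
    rw [← dist_eq_norm]; exact T.dist_circumcenter_eq_circumradius 0
  have hB : ‖B - O‖ = R := by
    rw [← dist_eq_norm]; exact T.dist_circumcenter_eq_circumradius 1
  have hC : ‖C - O‖ = R := by
    rw [← dist_eq_norm]; exact T.dist_circumcenter_eq_circumradius 2
  have hab : A - O ≠ B - O := fun he => hAB (by linear_combination (norm := module) he)
  have hac : A - O ≠ C - O := fun he => hAC (by linear_combination (norm := module) he)
  have hbc : B - O ≠ C - O := fun he => hBC (by linear_combination (norm := module) he)
  -- orthocenter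
  have hw : ∑ i : Fin 3, ((Finset.univ : Finset (Fin 3)).centroidWeights ℝ) i = 1 := by
    simp [Finset.centroidWeights]
  have hG := Finset.sum_smul_vsub_const_eq_affineCombination_vsub (Finset.univ)
    (((Finset.univ : Finset (Fin 3)).centroidWeights ℝ)) T.points O hw
  rw [← Finset.centroid_def] at hG
  have hHO : Ho -ᵥ O = (A - O) + (B - O) + (C - O) := by
    show T.orthocenter -ᵥ O = _
    rw [T.orthocenter_eq_smul_vsub_vadd_circumcenter, vadd_vsub, ← hG]
    have hTp : T.points = ![A, B, C] := rfl
    rw [Fin.sum_univ_three, hTp]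
    simp [Finset.centroidWeights, vsub_eq_sub, smul_add, smul_smul]
  have hdOH : dist O Ho = ‖(A - O) + (B - O) + (C - O)‖ := by
    rw [dist_comm, dist_eq_norm_vsub (EuclideanSpace ℝ (Fin 2)), hHO]
  -- key equivalence
  have key : (∠ B A C = π / 2 ∨ ∠ A B C = π / 2 ∨ ∠ B C A = π / 2) ↔ dist O Ho = R := by
    have hang : ∀ p q r : EuclideanSpace ℝ (Fin 2),
        ∠ p q r = π / 2 ↔ ⟪p - q, r - q⟫ = 0 := by
      intro p q r
      rw [EuclideanGeometry.angle,
        ← InnerProductGeometry.inner_eq_zero_iff_angle_eq_pi_div_two,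
        vsub_eq_sub, vsub_eq_sub]
    have hsub : ∀ p q : EuclideanSpace ℝ (Fin 2), p - q = (p - O) - (q - O) := by
      intro p q; module
    rw [hdOH]
    constructor
    · rintro (h1 | h1 | h1)
      · rw [hang, hsub B A, hsub C A] at h1
        exact helper_fwd _ _ _ hA hB hC hab hac h1
      · rw [hang, hsub A B, hsub C B] at h1
        have := helper_fwd _ _ _ hB hA hC (Ne.symm hab) hbc h1
        rw [show (B-O)+(A-O)+(C-O) = (A-O)+(B-O)+(C-O) by module] at this
        exact this
      · rw [hang, hsub B C, hsub A C] at h1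
        have := helper_fwd _ _ _ hC hB hA (Ne.symm hbc) (Ne.symm hac) h1
        rw [show (C-O)+(B-O)+(A-O) = (A-O)+(B-O)+(C-O) by module] at this
        exact this
    · intro h1
      rcases helper_back _ _ _ hA hB hC h1 with h2 | h2 | h2
      · left; rw [hang, hsub B A, hsub C A]; exact h2
      · right; left; rw [hang, hsub A B, hsub C B]; exact h2
      · right; right; rw [hang, hsub B C, hsub A C, real_inner_comm]; exact h2
  have hdON : dist O N = dist O Ho / 2 := by
    show dist O (midpoint ℝ O Ho) = _
    rw [dist_left_midpoint]
    norm_num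
    ring
  constructor
  · rw [key, hdON]
    constructor <;> intro h1 <;> linarith
  · rw [key, dist_comm N O, hdON]
    constructor <;> intro h1 <;> linarith
end

section
/- Let ABC be a nondegenerate triangle in the Euclidean plane with circumcenter O, circumradius R, orthocenter H, and nine-point center N = midpoint(O,H). Then the triangle is obtuse (one of the angles ∠BAC, ∠ABC, ∠BCA is strictly greater than π/2) if and only if dist(O,N) > R/2. -/
/-!
Let `s` be the common value of `⟪A - H, B - H⟫`, `⟪B - H, C - H⟫`, `⟪C - H, A - H⟫`
(Sylvester's formula `H - O = (A - O) + (B - O) + (C - O)` shows they agree and that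
`OH² = R² + 2 s`). Since `⟪B - A, C - A⟫ = AH² - s`, the angle at `A` is obtuse iff `AH² < s`,
and likewise at `B` and `C`. An obtuse angle therefore forces `s > 0`. Conversely, if `s > 0` but
`AH², BH², CH² ≥ s`, write `H` as an affine combination `∑ wᵢ Pᵢ` of the vertices: then
`0 = ‖∑ wᵢ (Pᵢ - H)‖² ≥ s (∑ wᵢ)² = s`, a contradiction.
-/

open EuclideanGeometry Real RealInnerProductSpace

section InnerProductSpace

variable {V : Type*} [NormedAddCommGroup V] [InnerProductSpace ℝ V]

theorem InnerProductGeometry.pi_div_two_lt_angle_iff_inner_lt_zero (x y : V) :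
    π / 2 < InnerProductGeometry.angle x y ↔ ⟪x, y⟫ < 0 := by
  rw [InnerProductGeometry.angle, ← not_le, Real.arccos_le_pi_div_two, not_le]
  rcases eq_or_ne x 0 with rfl | hx
  · simp
  rcases eq_or_ne y 0 with rfl | hy
  · simp
  rw [div_lt_iff₀ (mul_pos (norm_pos_iff.2 hx) (norm_pos_iff.2 hy)), zero_mul]

theorem exists_norm_sq_lt_of_pairwise_inner_eq {ι : Type*} [Fintype ι] {x : ι → V} {s : ℝ}
    (hx : Pairwise fun i j => ⟪x i, x j⟫ = s) (hs : 0 < s) {w : ι → ℝ} (hw : ∑ i, w i = 1)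
    (h0 : ∑ i, w i • x i = 0) : ∃ i, ‖x i‖ ^ 2 < s := by
  by_contra! hlarge
  have hle : s ≤ ⟪∑ i, w i • x i, ∑ j, w j • x j⟫ :=
    calc s = ∑ i, ∑ j, w i * w j * s := by
          simp only [← Finset.sum_mul, ← Finset.mul_sum, hw, one_mul]
      _ ≤ ∑ i, ∑ j, w i * w j * ⟪x i, x j⟫ := by
          refine Finset.sum_le_sum fun i _ => Finset.sum_le_sum fun j _ => ?_
          rcases eq_or_ne i j with rfl | hij
          · rw [real_inner_self_eq_norm_sq]
            exact mul_le_mul_of_nonneg_left (hlarge i) (mul_self_nonneg (w i))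
          · rw [hx hij]
      _ = ⟪∑ i, w i • x i, ∑ j, w j • x j⟫ := by
          simp_rw [sum_inner, real_inner_smul_left, inner_sum, real_inner_smul_right,
            Finset.mul_sum, mul_assoc]
  rw [h0, inner_zero_left] at hle
  linarith

theorem inner_sub_sum_sub_sum_eq_of_norm_eq {a : Fin 3 → V} {r : ℝ} (ha : ∀ k, ‖a k‖ = r)
    {i j : Fin 3} (hij : i ≠ j) :
    ⟪a i - ∑ k, a k, a j - ∑ k, a k⟫ = (‖∑ k, a k‖ ^ 2 - r ^ 2) / 2 := by
  have key : ∀ {b c d σ : V}, ‖b‖ = r → ‖c‖ = r → ‖d‖ = r → σ = b + c + d →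
      ⟪b - σ, c - σ⟫ = (‖σ‖ ^ 2 - r ^ 2) / 2 := by
    rintro b c d σ hb hc hd rfl
    rw [← real_inner_self_eq_norm_sq]
    simp only [inner_add_left, inner_add_right, inner_sub_left, inner_sub_right,
      real_inner_self_eq_norm_sq, hb, hc, hd]
    rw [real_inner_comm b c, real_inner_comm b d, real_inner_comm c d]
    ring
  rw [Fin.sum_univ_three]
  fin_cases i <;> fin_cases j <;>
    simp only [Fin.zero_eta, Fin.mk_one, Fin.reduceFinMk, ne_eq, not_true_eq_false] at hij ⊢ <;>
    first
    | exact key (ha _) (ha _) (ha 0) (by abel1)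
    | exact key (ha _) (ha _) (ha 1) (by abel1)
    | exact key (ha _) (ha _) (ha 2) (by abel1)

end InnerProductSpace

namespace EuclideanGeometry

variable {V P : Type*} [NormedAddCommGroup V] [InnerProductSpace ℝ V] [MetricSpace P]
  [NormedAddTorsor V P]

theorem exists_dist_sq_lt_of_pairwise_inner_vsub_eq {ι : Type*} [Fintype ι] {p : ι → P} {H : P}
    {s : ℝ} (hH : H ∈ affineSpan ℝ (Set.range p))
    (hp : Pairwise fun i j => ⟪p i -ᵥ H, p j -ᵥ H⟫ = s) (hs : 0 < s) :
    ∃ i, dist (p i) H ^ 2 < s := by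
  obtain ⟨w, hw, hHw⟩ := eq_affineCombination_of_mem_affineSpan_of_fintype hH
  have h0 : ∑ i, w i • (p i -ᵥ H) = 0 := by
    rw [← Finset.weightedVSubOfPoint_apply, ← vsub_self H, eq_comm, ← eq_vadd_iff_vsub_eq,
      ← Finset.affineCombination_eq_weightedVSubOfPoint_vadd_of_sum_eq_one _ _ _ hw, hHw]
  simp only [dist_eq_norm_vsub V]
  exact exists_norm_sq_lt_of_pairwise_inner_eq hp hs hw h0

theorem pi_div_two_lt_angle_iff_dist_sq_lt_of_inner_vsub_eq {A B C H : P} {s : ℝ}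
    (hAB : ⟪A -ᵥ H, B -ᵥ H⟫ = s) (hAC : ⟪A -ᵥ H, C -ᵥ H⟫ = s) (hBC : ⟪B -ᵥ H, C -ᵥ H⟫ = s) :
    π / 2 < ∠ B A C ↔ dist A H ^ 2 < s := by
  rw [angle, InnerProductGeometry.pi_div_two_lt_angle_iff_inner_lt_zero,
    ← vsub_sub_vsub_cancel_right B A H, ← vsub_sub_vsub_cancel_right C A H,
    dist_eq_norm_vsub V, ← real_inner_self_eq_norm_sq]
  simp only [inner_sub_left, inner_sub_right]
  rw [real_inner_comm (A -ᵥ H) (B -ᵥ H), hAB, hAC, hBC]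
  constructor <;> intro <;> linarith

end EuclideanGeometry

namespace Affine.Triangle

variable {V P : Type*} [NormedAddCommGroup V] [InnerProductSpace ℝ V] [MetricSpace P]
  [NormedAddTorsor V P]

theorem inner_vsub_orthocenter_vsub_orthocenter (T : Triangle ℝ P) {i j : Fin 3} (hij : i ≠ j) :
    ⟪T.points i -ᵥ T.orthocenter, T.points j -ᵥ T.orthocenter⟫ =
      (dist T.circumcenter T.orthocenter ^ 2 - T.circumradius ^ 2) / 2 := by
  rw [← vsub_sub_vsub_cancel_right (T.points i) _ T.circumcenter,
    ← vsub_sub_vsub_cancel_right (T.points j) _ T.circumcenter, dist_comm,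
    dist_eq_norm_vsub V, T.orthocenter_vsub_circumcenter_eq_sum_vsub]
  refine inner_sub_sum_sub_sum_eq_of_norm_eq
    (a := fun k => T.points k -ᵥ T.circumcenter) (fun k => ?_) hij
  rw [← dist_eq_norm_vsub V, T.dist_circumcenter_eq_circumradius]

theorem obtuse_iff_circumradius_lt_dist_circumcenter_orthocenter (T : Triangle ℝ P) :
    (π / 2 < ∠ (T.points 1) (T.points 0) (T.points 2) ∨
      π / 2 < ∠ (T.points 0) (T.points 1) (T.points 2) ∨
      π / 2 < ∠ (T.points 1) (T.points 2) (T.points 0)) ↔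
      T.circumradius < dist T.circumcenter T.orthocenter := by
  set s := (dist T.circumcenter T.orthocenter ^ 2 - T.circumradius ^ 2) / 2
  have hs : ∀ {i j : Fin 3}, i ≠ j →
      ⟪T.points i -ᵥ T.orthocenter, T.points j -ᵥ T.orthocenter⟫ = s :=
    T.inner_vsub_orthocenter_vsub_orthocenter
  have hR : T.circumradius < dist T.circumcenter T.orthocenter ↔ 0 < s := by
    rw [div_pos_iff_of_pos_right two_pos, sub_pos, sq_lt_sq₀ T.circumradius_nonneg dist_nonneg]
  rw [pi_div_two_lt_angle_iff_dist_sq_lt_of_inner_vsub_eq (hs (by decide)) (hs (by decide))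
      (hs (by decide)),
    pi_div_two_lt_angle_iff_dist_sq_lt_of_inner_vsub_eq (hs (by decide)) (hs (by decide))
      (hs (by decide)),
    pi_div_two_lt_angle_iff_dist_sq_lt_of_inner_vsub_eq (hs (by decide)) (hs (by decide))
      (hs (by decide)), hR]
  constructor
  · rintro (h | h | h) <;> exact lt_of_le_of_lt (sq_nonneg _) h
  · intro hpos
    obtain ⟨i, hi⟩ := exists_dist_sq_lt_of_pairwise_inner_vsub_eq T.orthocenter_mem_affineSpan
      (fun _ _ hij => hs hij) hpos
    fin_cases i
    exacts [Or.inl hi, Or.inr (Or.inl hi), Or.inr (Or.inr hi)]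

end Affine.Triangle

/-- A nondegenerate triangle is obtuse if and only if the distance between its circumcenter
and its nine-point center is strictly greater than half the circumradius. -/
theorem obtuse_iff_dist_circumcenter_ninePointCenter_gt
    (A B C : EuclideanSpace ℝ (Fin 2)) (h : AffineIndependent ℝ ![A, B, C]) :
    let T : Affine.Triangle ℝ (EuclideanSpace ℝ (Fin 2)) := ⟨![A, B, C], h⟩
    let O := T.circumcenter
    let R := T.circumradius
    let H := T.orthocenter
    let N := midpoint ℝ O H
    (π / 2 < ∠ B A C ∨ π / 2 < ∠ A B C ∨ π / 2 < ∠ B C A) ↔ R / 2 < dist O N := by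
  intro T O R H N
  have hN : dist O N = dist O H / 2 := by
    rw [dist_left_midpoint, Real.norm_two, inv_mul_eq_div]
  rw [hN, div_lt_div_iff_of_pos_right two_pos]
  exact T.obtuse_iff_circumradius_lt_dist_circumcenter_orthocenter
end

section
/- Let ABC be a nondegenerate triangle in the Euclidean plane with circumcenter O, circumradius R, orthocenter H, and nine-point center N = midpoint(O,H). If the angle at B is obtuse (∠ABC > π/2), then the vertex B lies strictly inside the Euler circle: dist(N, B) < R/2. -/
open EuclideanGeometry Real
open RealInnerProductSpace

/-- If the angle at `B` of a nondegenerate triangle `ABC` is obtuse, then the vertex `B` lies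
strictly inside the Euler circle. -/
theorem obtuse_vertex_mem_interior_euler_circle
    (A B C : EuclideanSpace ℝ (Fin 2)) (h : AffineIndependent ℝ ![A, B, C])
    (hB : π / 2 < ∠ A B C) :
    let T : Affine.Triangle ℝ (EuclideanSpace ℝ (Fin 2)) := ⟨![A, B, C], h⟩
    let O := T.circumcenter
    let R := T.circumradius
    let H := T.orthocenter
    let N := midpoint ℝ O H
    dist N B < R / 2 := by
  intro T O R H N
  set a : EuclideanSpace ℝ (Fin 2) := A -ᵥ O with ha
  set b : EuclideanSpace ℝ (Fin 2) := B -ᵥ O with hb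
  set c : EuclideanSpace ℝ (Fin 2) := C -ᵥ O with hc
  have hRpos : 0 < R := T.circumradius_pos
  have hdist : ∀ i : Fin 3, dist (T.points i) T.circumcenter = R :=
    T.dist_circumcenter_eq_circumradius
  have hA : ‖a‖ = R := by
    have := hdist 0
    simpa [T, dist_eq_norm_vsub, ha] using this
  have hBn : ‖b‖ = R := by
    have := hdist 1
    simpa [T, dist_eq_norm_vsub, hb] using this
  have hCn : ‖c‖ = R := by
    have := hdist 2
    simpa [T, dist_eq_norm_vsub, hc] using this
  -- obtuse angle gives negative inner product
  have hAB : A ≠ B := by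
    intro hAB
    have : (0 : Fin 3) = 1 := h.injective (by simp [hAB])
    exact absurd this (by decide)
  have hCB : C ≠ B := by
    intro hCB
    have : (2 : Fin 3) = 1 := h.injective (by simp [hCB])
    exact absurd this (by decide)
  have hinner : ⟪A -ᵥ B, C -ᵥ B⟫ < 0 := by
    have hcos : Real.cos (∠ A B C) < 0 :=
      Real.cos_neg_of_pi_div_two_lt_of_lt hB
        (lt_of_le_of_lt (EuclideanGeometry.angle_le_pi A B C) (by linarith [Real.pi_pos]))
    have h1 : Real.cos (∠ A B C) * (‖A -ᵥ B‖ * ‖C -ᵥ B‖) = ⟪A -ᵥ B, C -ᵥ B⟫ :=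
      InnerProductGeometry.cos_angle_mul_norm_mul_norm _ _
    have h2 : 0 < ‖A -ᵥ B‖ * ‖C -ᵥ B‖ := by
      have := sub_ne_zero.mpr hAB
      have := sub_ne_zero.mpr hCB
      apply mul_pos <;> rw [norm_pos_iff] <;> simp_all [vsub_eq_sub]
    nlinarith
  -- the key vector identity
  have hHO : H -ᵥ O = a + b + c := by
    have h3 : H = (3 : ℝ) • ((Finset.univ : Finset (Fin 3)).centroid ℝ T.points -ᵥ O) +ᵥ O :=
      T.orthocenter_eq_smul_vsub_vadd_circumcenter
    have hG : (Finset.univ : Finset (Fin 3)).centroid ℝ T.points -ᵥ O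
        = (3 : ℝ)⁻¹ • (a + b + c) := by
      rw [Finset.centroid_def,
        ← Finset.sum_smul_vsub_const_eq_affineCombination_vsub _ _ _ O (by
          norm_num [Finset.centroidWeights_apply, Fin.sum_univ_three])]
      simp [Finset.centroidWeights_apply, Fin.sum_univ_three, T, ha, hb, hc, smul_add]
    rw [h3, vadd_vsub, hG, smul_smul]
    norm_num
  have hNB : N -ᵥ B = (2 : ℝ)⁻¹ • (a + c - b) := by
    have h4 : N -ᵥ O = (2 : ℝ)⁻¹ • (a + b + c) := by
      show midpoint ℝ O H -ᵥ O = _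
      rw [midpoint_vsub_left (R := ℝ) O H, hHO, invOf_eq_inv]
    have h5 : N -ᵥ B = (N -ᵥ O) - (B -ᵥ O) := (vsub_sub_vsub_cancel_right N B O).symm
    rw [h5, h4, ← hb]
    rw [smul_add, smul_add, smul_sub, smul_add]
    module
  -- squared norms
  have hsq : ∀ x : EuclideanSpace ℝ (Fin 2), ⟪x, x⟫ = ‖x‖ ^ 2 := fun x =>
    real_inner_self_eq_norm_sq x
  have hab : A -ᵥ B = a - b := (vsub_sub_vsub_cancel_right A B O).symm
  have hcb : C -ᵥ B = c - b := (vsub_sub_vsub_cancel_right C B O).symm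
  have hinner' : ⟪a, c⟫ - ⟪a, b⟫ - ⟪c, b⟫ + R ^ 2 < 0 := by
    rw [hab, hcb] at hinner
    have := hinner
    simp only [inner_sub_left, inner_sub_right] at this
    have hbb : ⟪b, b⟫ = R ^ 2 := by rw [hsq, hBn]
    have hcomm : ⟪b, c⟫ = ⟪c, b⟫ := real_inner_comm c b
    linarith
  have hnorm : ‖a + c - b‖ ^ 2 < R ^ 2 := by
    have hexp : ‖a + c - b‖ ^ 2
        = ⟪a, a⟫ + ⟪c, c⟫ + ⟪b, b⟫ + 2 * ⟪a, c⟫ - 2 * ⟪a, b⟫ - 2 * ⟪c, b⟫ := by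
      rw [← hsq]
      simp only [inner_sub_left, inner_sub_right, inner_add_left, inner_add_right]
      have h1 : ⟪c, a⟫ = ⟪a, c⟫ := real_inner_comm a c
      have h2 : ⟪b, a⟫ = ⟪a, b⟫ := real_inner_comm a b
      have h3 : ⟪b, c⟫ = ⟪c, b⟫ := real_inner_comm c b
      linarith
    have haa : ⟪a, a⟫ = R ^ 2 := by rw [hsq, hA]
    have hbb : ⟪b, b⟫ = R ^ 2 := by rw [hsq, hBn]
    have hcc : ⟪c, c⟫ = R ^ 2 := by rw [hsq, hCn]
    linarith
  have hfinal : dist N B ^ 2 < (R / 2) ^ 2 := by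
    rw [dist_eq_norm_vsub, hNB, norm_smul]
    rw [mul_pow]
    simp only [norm_inv, Real.norm_ofNat]
    nlinarith [norm_nonneg (a + c - b)]
  exact lt_of_pow_lt_pow_left₀ 2 (by positivity) hfinal
end

section
/- Let ABC be a nondegenerate triangle in the Euclidean plane with circumcenter O, circumradius R, orthocenter H, and nine-point center N = midpoint(O,H). Then the circumcircle (the circle of center O and radius R) and the Euler circle (the circle of center N and radius R/2) intersect in two distinct points — i.e., there exist P₁ ≠ P₂ with dist(O,P₁) = dist(O,P₂) = R and dist(N,P₁) = dist(N,P₂) = R/2 — if and only if the triangle is obtuse (one of its angles is strictly greater than π/2). -/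
open EuclideanGeometry Real

local notation "⟪" x ", " y "⟫" => @inner ℝ _ _ x y

private lemma gram_det (a0 a1 b0 b1 c0 c1 r : ℝ) (ha : a0^2+a1^2 = r) (hb : b0^2+b1^2 = r)
    (hc : c0^2+c1^2 = r) :
    r^3 + 2*(b0*c0+b1*c1)*(a0*c0+a1*c1)*(a0*b0+a1*b1)
      - r*((b0*c0+b1*c1)^2+(a0*c0+a1*c1)^2+(a0*b0+a1*b1)^2) = 0 := by
  linear_combination ((b0*c0+b1*c1)^2 - r^2)*ha + ((a0*c0+a1*c1)^2 - (a0^2+a1^2)*r)*hb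
    + ((a0*b0+a1*b1)^2 - (a0^2+a1^2)*(b0^2+b1^2))*hc

private lemma core_alg (r x y z : ℝ) (hr : 0 < r) (hx : x < r) (hy : y < r) (hz : z < r)
    (hg : r^3 + 2*x*y*z - r*(x^2+y^2+z^2) = 0) :
    (-r < x + y + z) ↔ (r + x - y - z < 0 ∨ r + y - x - z < 0 ∨ r + z - x - y < 0) := by
  have key : r*((r+x-y-z)*((r+y-x-z)*(r+z-x-y)))
      = -2*((r+x+y+z)*((r-x)*((r-y)*(r-z)))) := by
    linear_combination (3*r-x-y-z)*hg
  have hP : 0 < (r-x)*((r-y)*(r-z)) :=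
    mul_pos (sub_pos.2 hx) (mul_pos (sub_pos.2 hy) (sub_pos.2 hz))
  constructor
  · intro hsum
    by_contra hcon
    push_neg at hcon
    obtain ⟨h1, h2, h3⟩ := hcon
    nlinarith [hP, mul_nonneg h1 (mul_nonneg h2 h3)]
  · have final : ∀ u v w : ℝ, u < 0 → 0 < v → 0 < w →
        r*(u*(v*w)) = -2*((r+x+y+z)*((r-x)*((r-y)*(r-z)))) → -r < x+y+z := by
      intro u v w hu hv hw hk
      have hL : r*(u*(v*w)) < 0 :=
        mul_neg_of_pos_of_neg hr (mul_neg_of_neg_of_pos hu (mul_pos hv hw))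
      rw [hk] at hL
      by_contra hS
      push_neg at hS
      have : x + y + z + r ≤ 0 := by linarith
      nlinarith [mul_nonpos_of_nonpos_of_nonneg this hP.le]
    rintro (h | h | h)
    · exact final _ _ _ h (by linarith) (by linarith) key
    · have key2 : r*((r+y-x-z)*((r+x-y-z)*(r+z-x-y)))
        = -2*((r+x+y+z)*((r-x)*((r-y)*(r-z)))) := by linear_combination key
      exact final _ _ _ h (by linarith) (by linarith) key2
    · have key3 : r*((r+z-x-y)*((r+x-y-z)*(r+y-x-z)))
        = -2*((r+x+y+z)*((r-x)*((r-y)*(r-z)))) := by linear_combination key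
      exact final _ _ _ h (by linarith) (by linarith) key3

private lemma quad_aux (d R : ℝ) (hR : 0 < R) (hd : 0 < d) (h : (d^2 + 3*R^2/4)/2 < R*d) :
    R/2 < d ∧ d < 3*R/2 := by
  constructor
  · by_contra hle
    push_neg at hle
    nlinarith [mul_nonneg (by linarith : (0:ℝ) ≤ R/2 - d) (by linarith : (0:ℝ) ≤ 3*R/2 - d)]
  · by_contra hle
    push_neg at hle
    nlinarith [mul_nonneg (by linarith : (0:ℝ) ≤ d - R/2) (by linarith : (0:ℝ) ≤ d - 3*R/2)]

private lemma two_circles_mp (O N : EuclideanSpace ℝ (Fin 2)) (R : ℝ) (hR : 0 < R)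
    (hex : ∃ P₁ P₂ : EuclideanSpace ℝ (Fin 2), P₁ ≠ P₂ ∧
        dist O P₁ = R ∧ dist O P₂ = R ∧ dist N P₁ = R / 2 ∧ dist N P₂ = R / 2) :
    R / 2 < dist O N ∧ dist O N < 3 * R / 2 := by
  obtain ⟨P₁, P₂, hne, h1, h2, h3, h4⟩ := hex
  set v : EuclideanSpace ℝ (Fin 2) := N - O with hv
  have hdist : dist O N = ‖v‖ := by rw [dist_eq_norm, hv, ← norm_neg]; congr 1; abel
  set p₁ : EuclideanSpace ℝ (Fin 2) := P₁ - O with hp1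
  set p₂ : EuclideanSpace ℝ (Fin 2) := P₂ - O with hp2
  have hn1 : ‖p₁‖ = R := by rw [hp1, ← dist_eq_norm, dist_comm]; exact h1
  have hn2 : ‖p₂‖ = R := by rw [hp2, ← dist_eq_norm, dist_comm]; exact h2
  have hm1 : ‖p₁ - v‖ = R / 2 := by
    rw [hp1, hv]; rw [dist_eq_norm] at h3; rw [← norm_neg]; rw [show -(P₁ - O - (N - O)) = N - P₁ by abel]; exact h3
  have hm2 : ‖p₂ - v‖ = R / 2 := by
    rw [hp2, hv]; rw [dist_eq_norm] at h4; rw [← norm_neg]; rw [show -(P₂ - O - (N - O)) = N - P₂ by abel]; exact h4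
  have hi1 : ⟪p₁, v⟫ = (‖v‖^2 + 3*R^2/4)/2 := by
    have := norm_sub_sq_real p₁ v
    rw [hn1, hm1] at this
    nlinarith [this]
  have hi2 : ⟪p₂, v⟫ = (‖v‖^2 + 3*R^2/4)/2 := by
    have := norm_sub_sq_real p₂ v
    rw [hn2, hm2] at this
    nlinarith [this]
  have hd0 : ‖v‖ ≠ 0 := by
    intro h0
    rw [norm_eq_zero.1 h0, sub_zero, hn1] at hm1
    linarith
  have hdpos : 0 < ‖v‖ := lt_of_le_of_ne (norm_nonneg v) (Ne.symm hd0)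
  have hcs : ⟪p₁, v⟫ < R * ‖v‖ := by
    rcases lt_or_eq_of_le (real_inner_le_norm p₁ v) with hlt | heq
    · rwa [hn1] at hlt
    · exfalso
      apply hne
      have key : ∀ p : EuclideanSpace ℝ (Fin 2), ‖p‖ = R → ⟪p, v⟫ = R * ‖v‖ →
          ‖v‖ • p = R • v := by
        intro p hp hip
        have hz : ‖(‖v‖ • p - R • v)‖^2 = 0 := by
          rw [norm_sub_sq_real, norm_smul, norm_smul, real_inner_smul_left,
            real_inner_smul_right, hp, hip]
          simp only [Real.norm_eq_abs, abs_of_nonneg (norm_nonneg v),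
            abs_of_nonneg hR.le, norm_norm]
          ring
        have h0 : ‖v‖ • p - R • v = 0 :=
          norm_eq_zero.1 (pow_eq_zero_iff two_ne_zero |>.1 hz)
        exact sub_eq_zero.1 h0
      have e1 : ‖v‖ • p₁ = R • v := key p₁ hn1 (by rw [heq, hn1])
      have e2 : ‖v‖ • p₂ = R • v := key p₂ hn2 (by rw [hi2, ← hi1, heq, hn1])
      have hpp : p₁ = p₂ := smul_right_injective _ hd0 (e1.trans e2.symm)
      have : P₁ - O = P₂ - O := by rw [← hp1, ← hp2, hpp]
      exact sub_left_injective this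
  rw [hi1] at hcs
  rw [hdist]
  exact quad_aux ‖v‖ R hR hdpos hcs

set_option maxHeartbeats 1600000 in
private lemma two_circles_mpr (O N : EuclideanSpace ℝ (Fin 2)) (R : ℝ) (hR : 0 < R)
    (h1 : R / 2 < dist O N) (h2 : dist O N < 3 * R / 2) :
    ∃ P₁ P₂ : EuclideanSpace ℝ (Fin 2), P₁ ≠ P₂ ∧
        dist O P₁ = R ∧ dist O P₂ = R ∧ dist N P₁ = R / 2 ∧ dist N P₂ = R / 2 := by
  set v : EuclideanSpace ℝ (Fin 2) := N - O with hv
  have hdist : dist O N = ‖v‖ := by rw [dist_eq_norm, hv, ← norm_neg]; congr 1; abel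
  rw [hdist] at h1 h2
  have hdpos : 0 < ‖v‖ := lt_trans (by linarith) h1
  obtain ⟨w, hvw, hnw⟩ : ∃ w : EuclideanSpace ℝ (Fin 2), ⟪v, w⟫ = 0 ∧ ‖w‖ = ‖v‖ := by
    refine ⟨(WithLp.equiv 2 (Fin 2 → ℝ)).symm ![-(v 1), v 0], ?_, ?_⟩
    · rw [PiLp.inner_apply]
      simp [Fin.sum_univ_two, WithLp.equiv_symm_apply, PiLp.toLp_apply, RCLike.inner_apply]
      ring
    · have hsq : ‖(WithLp.equiv 2 (Fin 2 → ℝ)).symm ![-(v 1), v 0]‖^2 = ‖v‖^2 := by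
        rw [← real_inner_self_eq_norm_sq, ← real_inner_self_eq_norm_sq,
          PiLp.inner_apply, PiLp.inner_apply]
        simp [Fin.sum_univ_two, WithLp.equiv_symm_apply, PiLp.toLp_apply, RCLike.inner_apply]
        ring
      have h' := congrArg Real.sqrt hsq
      rwa [Real.sqrt_sq (norm_nonneg _), Real.sqrt_sq (norm_nonneg _)] at h'
  set d := ‖v‖ with hdd
  clear_value v
  set t : ℝ := (d^2 + 3*R^2/4)/(2*d^2) with ht
  have ht2 : 2*t*d^2 = d^2 + 3*R^2/4 := by
    rw [ht]; field_simp
  have hs2 : 0 < R^2 - t^2*d^2 := by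
    have hlt : d^2 + 3*R^2/4 < 2*R*d := by
      nlinarith [mul_pos (by linarith : (0:ℝ) < d - R/2) (by linarith : (0:ℝ) < 3*R/2 - d)]
    have hc : (0:ℝ) < d^2 + 3*R^2/4 := by positivity
    nlinarith [ht2, hlt, hc, sq_nonneg (2*t*d^2 - 2*R*d), hdpos]
  set s : ℝ := Real.sqrt (R^2 - t^2*d^2) / d with hs
  have hspos : 0 < s := div_pos (Real.sqrt_pos.2 hs2) hdpos
  have hsd : s^2*d^2 = R^2 - t^2*d^2 := by
    rw [hs, div_pow, Real.sq_sqrt hs2.le]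
    field_simp
  clear_value t s d
  have expand : ∀ a b : ℝ, ‖a • v + b • w‖^2 = (a^2+b^2)*d^2 := by
    intro a b
    rw [norm_add_sq_real, norm_smul, norm_smul, real_inner_smul_left,
      real_inner_smul_right, hvw, hnw, ← hdd]
    simp only [Real.norm_eq_abs]
    rw [mul_pow, mul_pow, sq_abs, sq_abs]
    ring
  have hw0 : w ≠ 0 := by
    intro h0
    rw [h0, norm_zero] at hnw
    exact hdpos.ne' hnw.symm
  refine ⟨O + (t • v + s • w), O + (t • v + (-s) • w), ?_, ?_, ?_, ?_, ?_⟩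
  · intro heq
    have h' : s • w = (-s) • w := add_left_cancel (add_left_cancel heq)
    have h'' : (2*s) • w = 0 := by
      have : s • w - (-s) • w = 0 := sub_eq_zero.2 h'
      rw [← this]; module
    rcases smul_eq_zero.1 h'' with hs0 | hww0
    · nlinarith [hspos]
    · exact hw0 hww0
  · rw [dist_eq_norm]
    have he : O - (O + (t • v + s • w)) = -(t • v + s • w) := by abel
    rw [he, norm_neg]
    have hsq : ‖t • v + s • w‖^2 = R^2 := by
      rw [expand]; linear_combination hsd
    nlinarith [norm_nonneg (t • v + s • w), hsq, hR]
  · rw [dist_eq_norm]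
    have he : O - (O + (t • v + (-s) • w)) = -(t • v + (-s) • w) := by abel
    rw [he, norm_neg]
    have hsq : ‖t • v + (-s) • w‖^2 = R^2 := by
      rw [expand]; linear_combination hsd
    nlinarith [norm_nonneg (t • v + (-s) • w), hsq, hR]
  · rw [dist_eq_norm]
    have he : N - (O + (t • v + s • w)) = (1-t) • v + (-s) • w := by
      rw [hv]; module
    rw [he]
    have hsq : ‖(1-t) • v + (-s) • w‖^2 = (R/2)^2 := by
      rw [expand]; linear_combination hsd - ht2
    nlinarith [norm_nonneg ((1-t) • v + (-s) • w), hsq, hR]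
  · rw [dist_eq_norm]
    have he : N - (O + (t • v + (-s) • w)) = (1-t) • v + s • w := by
      rw [hv]; module
    rw [he]
    have hsq : ‖(1-t) • v + s • w‖^2 = (R/2)^2 := by
      rw [expand]; linear_combination hsd - ht2
    nlinarith [norm_nonneg ((1-t) • v + s • w), hsq, hR]

private lemma obtuse_iff_inner_neg {V : Type*} [NormedAddCommGroup V] [InnerProductSpace ℝ V]
    {x y : V} (hx : x ≠ 0) (hy : y ≠ 0) :
    π / 2 < InnerProductGeometry.angle x y ↔ ⟪x, y⟫ < 0 := by
  have hb : 0 < ‖x‖ * ‖y‖ := mul_pos (norm_pos_iff.2 hx) (norm_pos_iff.2 hy)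
  rw [InnerProductGeometry.angle, ← not_le, Real.arccos_le_pi_div_two, not_le, div_neg_iff]
  constructor
  · rintro (⟨h1', h2'⟩ | ⟨h1', h2'⟩)
    · linarith
    · exact h1'
  · intro h'
    right
    exact ⟨h', hb⟩

set_option maxHeartbeats 1600000 in
/-- The circumcircle and the Euler circle of a nondegenerate triangle intersect in two
distinct points if and only if the triangle is obtuse. -/
theorem circumcircle_euler_circle_secant_iff_obtuse
    (A B C : EuclideanSpace ℝ (Fin 2)) (h : AffineIndependent ℝ ![A, B, C]) :
    let T : Affine.Triangle ℝ (EuclideanSpace ℝ (Fin 2)) := ⟨![A, B, C], h⟩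
    let O := T.circumcenter
    let R := T.circumradius
    let H := T.orthocenter
    let N := midpoint ℝ O H
    (∃ P₁ P₂ : EuclideanSpace ℝ (Fin 2), P₁ ≠ P₂ ∧
        dist O P₁ = R ∧ dist O P₂ = R ∧ dist N P₁ = R / 2 ∧ dist N P₂ = R / 2) ↔
      (π / 2 < ∠ B A C ∨ π / 2 < ∠ A B C ∨ π / 2 < ∠ B C A) := by
  intro T O R H N
  have hR : 0 < R := T.circumradius_pos
  have hOA : dist A O = R := T.dist_circumcenter_eq_circumradius 0
  have hOB : dist B O = R := T.dist_circumcenter_eq_circumradius 1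
  have hOC : dist C O = R := T.dist_circumcenter_eq_circumradius 2
  have hAB : A ≠ B := fun e => (by decide : (0 : Fin 3) ≠ 1) (h.injective e)
  have hAC : A ≠ C := fun e => (by decide : (0 : Fin 3) ≠ 2) (h.injective e)
  have hBC : B ≠ C := fun e => (by decide : (1 : Fin 3) ≠ 2) (h.injective e)
  set a : EuclideanSpace ℝ (Fin 2) := A - O with ha
  set b : EuclideanSpace ℝ (Fin 2) := B - O with hb
  set c : EuclideanSpace ℝ (Fin 2) := C - O with hc
  set r : ℝ := R ^ 2 with hrdef
  set x : ℝ := ⟪b, c⟫ with hxdef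
  set y : ℝ := ⟪a, c⟫ with hydef
  set z : ℝ := ⟪a, b⟫ with hzdef
  have hr : 0 < r := by positivity
  have hna : ‖a‖ = R := by rw [ha, ← dist_eq_norm]; exact hOA
  have hnb : ‖b‖ = R := by rw [hb, ← dist_eq_norm]; exact hOB
  have hnc : ‖c‖ = R := by rw [hc, ← dist_eq_norm]; exact hOC
  have hco : ∀ u w : EuclideanSpace ℝ (Fin 2), ⟪u, w⟫ = u 0 * w 0 + u 1 * w 1 := by
    intro u w
    rw [PiLp.inner_apply]
    simp [RCLike.inner_apply, Fin.sum_univ_two]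
    ring
  have hnormsq : ∀ u : EuclideanSpace ℝ (Fin 2), ‖u‖ ^ 2 = u 0 ^ 2 + u 1 ^ 2 := by
    intro u
    rw [← real_inner_self_eq_norm_sq, hco]
    ring
  have hra : a 0 ^ 2 + a 1 ^ 2 = r := by rw [← hnormsq, hna]
  have hrb : b 0 ^ 2 + b 1 ^ 2 = r := by rw [← hnormsq, hnb]
  have hrc : c 0 ^ 2 + c 1 ^ 2 = r := by rw [← hnormsq, hnc]
  have hgram : r ^ 3 + 2 * x * y * z - r * (x ^ 2 + y ^ 2 + z ^ 2) = 0 := by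
    rw [hxdef, hydef, hzdef, hco, hco, hco]
    exact gram_det _ _ _ _ _ _ _ hra hrb hrc
  have hlt : ∀ u w : EuclideanSpace ℝ (Fin 2), ‖u‖ = R → ‖w‖ = R → u ≠ w → ⟪u, w⟫ < r := by
    intro u w hu hw huw
    have hpos : 0 < ‖u - w‖ := norm_pos_iff.2 (sub_ne_zero.2 huw)
    have hexp := norm_sub_sq_real u w
    rw [hu, hw] at hexp
    nlinarith [mul_pos hpos hpos, hexp]
  have hxlt : x < r := hlt b c hnb hnc (fun e => hBC (sub_left_injective e))
  have hylt : y < r := hlt a c hna hnc (fun e => hAC (sub_left_injective e))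
  have hzlt : z < r := hlt a b hna hnb (fun e => hAB (sub_left_injective e))
  -- orthocenter
  have hHO : H - O = a + b + c := by
    have h1 : H = (3 : ℝ) • ((Finset.univ : Finset (Fin 3)).centroid ℝ T.points -ᵥ O) +ᵥ O :=
      T.orthocenter_eq_smul_vsub_vadd_circumcenter
    have hsum1 : ∑ i : Fin 3, (Finset.univ : Finset (Fin 3)).centroidWeights ℝ i = 1 :=
      Finset.sum_centroidWeights_eq_one_of_nonempty ℝ _ ⟨0, Finset.mem_univ 0⟩
    have hG : (Finset.univ : Finset (Fin 3)).centroid ℝ T.points -ᵥ O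
        = ∑ i : Fin 3, ((3 : ℝ)⁻¹) • (T.points i -ᵥ O) := by
      rw [Finset.centroid_def,
        Finset.affineCombination_eq_weightedVSubOfPoint_vadd_of_sum_eq_one _ _ _ hsum1 O,
        vadd_vsub, Finset.weightedVSubOfPoint_apply]
      refine Finset.sum_congr rfl fun i _ => ?_
      have hwi : (Finset.univ : Finset (Fin 3)).centroidWeights ℝ i = (3 : ℝ)⁻¹ := by
        simp [Finset.centroidWeights_apply]
      rw [hwi]
    rw [h1, hG, vadd_eq_add, add_sub_cancel_right, Finset.smul_sum]
    have hpt : ∀ i : Fin 3, (3 : ℝ) • ((3 : ℝ)⁻¹ • (T.points i -ᵥ O)) = T.points i -ᵥ O := by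
      intro i
      rw [smul_smul]
      norm_num
    rw [Fin.sum_univ_three, hpt 0, hpt 1, hpt 2]
    show (A -ᵥ O) + (B -ᵥ O) + (C -ᵥ O) = a + b + c
    rw [vsub_eq_sub, vsub_eq_sub, vsub_eq_sub, ha, hb, hc]
  have dON : dist O N = ‖a + b + c‖ / 2 := by
    show dist O (midpoint ℝ O H) = ‖a + b + c‖ / 2
    rw [dist_left_midpoint, dist_eq_norm, ← norm_neg (O - H)]
    have : -(O - H) = H - O := by abel
    rw [this, hHO]
    rw [Real.norm_ofNat]
    ring
  have step1 : (∃ P₁ P₂ : EuclideanSpace ℝ (Fin 2), P₁ ≠ P₂ ∧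
        dist O P₁ = R ∧ dist O P₂ = R ∧ dist N P₁ = R / 2 ∧ dist N P₂ = R / 2) ↔
      (R / 2 < dist O N ∧ dist O N < 3 * R / 2) :=
    ⟨two_circles_mp O N R hR, fun hh => two_circles_mpr O N R hR hh.1 hh.2⟩
  have hsumsq : ‖a + b + c‖ ^ 2 = 3 * r + 2 * (x + y + z) := by
    rw [hnormsq, hxdef, hydef, hzdef, hco, hco, hco]
    have e0 : (a + b + c) 0 = a 0 + b 0 + c 0 := rfl
    have e1 : (a + b + c) 1 = a 1 + b 1 + c 1 := rfl
    rw [e0, e1]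
    linear_combination hra + hrb + hrc
  have step2 : (R / 2 < dist O N ∧ dist O N < 3 * R / 2) ↔ (-r < x + y + z) := by
    rw [dON]
    have hnn : (0 : ℝ) ≤ ‖a + b + c‖ := norm_nonneg _
    constructor
    · rintro ⟨hl, _⟩
      nlinarith [hsumsq, hnn, hR, mul_pos (by linarith : (0:ℝ) < ‖a + b + c‖ - R)
        (by linarith : (0:ℝ) < ‖a + b + c‖ + R)]
    · intro hl
      constructor
      · by_contra hle
        push_neg at hle
        nlinarith [hsumsq, hnn, hR, mul_nonneg (by linarith : (0:ℝ) ≤ R - ‖a + b + c‖)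
          (by linarith : (0:ℝ) ≤ R + ‖a + b + c‖)]
      · by_contra hle
        push_neg at hle
        nlinarith [hsumsq, hnn, hR, hxlt, hylt, hzlt,
          mul_nonneg (by linarith : (0:ℝ) ≤ ‖a + b + c‖ - 3 * R)
          (by linarith : (0:ℝ) ≤ ‖a + b + c‖ + 3 * R)]
  have eco : ∀ u w : EuclideanSpace ℝ (Fin 2), ∀ i : Fin 2, (u - w) i = u i - w i :=
    fun u w i => rfl
  have hAngleA : π / 2 < ∠ B A C ↔ r + x - y - z < 0 := by
    rw [EuclideanGeometry.angle,
      obtuse_iff_inner_neg (vsub_ne_zero.2 hAB.symm) (vsub_ne_zero.2 hAC.symm)]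
    have hBA : B -ᵥ A = b - a := by rw [vsub_eq_sub, hb, ha]; abel
    have hCA : C -ᵥ A = c - a := by rw [vsub_eq_sub, hc, ha]; abel
    have hiA : ⟪b - a, c - a⟫ = r + x - y - z := by
      rw [hco, hxdef, hydef, hzdef, hco, hco, hco, eco b a 0, eco b a 1, eco c a 0, eco c a 1]
      linear_combination hra
    rw [hBA, hCA, hiA]
  have hAngleB : π / 2 < ∠ A B C ↔ r + y - x - z < 0 := by
    rw [EuclideanGeometry.angle,
      obtuse_iff_inner_neg (vsub_ne_zero.2 hAB) (vsub_ne_zero.2 hBC.symm)]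
    have hAB' : A -ᵥ B = a - b := by rw [vsub_eq_sub, ha, hb]; abel
    have hCB : C -ᵥ B = c - b := by rw [vsub_eq_sub, hc, hb]; abel
    have hiB : ⟪a - b, c - b⟫ = r + y - x - z := by
      rw [hco, hxdef, hydef, hzdef, hco, hco, hco, eco a b 0, eco a b 1, eco c b 0, eco c b 1]
      linear_combination hrb
    rw [hAB', hCB, hiB]
  have hAngleC : π / 2 < ∠ B C A ↔ r + z - x - y < 0 := by
    rw [EuclideanGeometry.angle,
      obtuse_iff_inner_neg (vsub_ne_zero.2 hBC) (vsub_ne_zero.2 hAC)]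
    have hBC' : B -ᵥ C = b - c := by rw [vsub_eq_sub, hb, hc]; abel
    have hAC' : A -ᵥ C = a - c := by rw [vsub_eq_sub, ha, hc]; abel
    have hiC : ⟪b - c, a - c⟫ = r + z - x - y := by
      rw [hco, hxdef, hydef, hzdef, hco, hco, hco, eco b c 0, eco b c 1, eco a c 0, eco a c 1]
      linear_combination hrc
    rw [hBC', hAC', hiC]
  rw [step1, step2, core_alg r x y z hr hxlt hylt hzlt hgram, ← hAngleA, ← hAngleB, ← hAngleC]
end

section
/- Let ABC be a nondegenerate triangle in the Euclidean plane with circumcenter O, circumradius R, orthocenter H, and nine-point center N = midpoint(O,H). If dist(O,N) > R/2, then at least one of the vertices A, B, C lies strictly inside the Euler circle, i.e., there exists X ∈ {A, B, C} with dist(N, X) < R/2. (Consequently every triangle sharing this circumcircle and Euler circle has a vertex on the arc of the circumcircle interior to the Euler circle.) -/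
/-!
Put the circumcenter `O` at the origin and let `a, b, c` be the vertex vectors, all of norm `R`.
By Sylvester's theorem `H = a + b + c`, so for a vertex `x` we have `2 (x - N) = 2x - (a + b + c)`:
the hypothesis reads `R < ‖a + b + c‖` and `x` lies inside the Euler circle iff
`‖2x - (a + b + c)‖ < R`. Since `a, b, c` lie in a plane their Gram determinant vanishes, and
modulo that relation
`R² ∏ₓ (‖2x - (a + b + c)‖² - R²) = -(‖a + b + c‖² - R²) ‖a - b‖² ‖b - c‖² ‖c - a‖²`.
The right side is negative for distinct vertices, so one factor on the left is negative.
-/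

open EuclideanGeometry Real
open scoped RealInnerProductSpace

section InnerProduct

variable {V : Type*} [NormedAddCommGroup V] [InnerProductSpace ℝ V]

theorem det_gram_fin_three_eq_zero_of_not_linearIndependent {a b c : V}
    (h : ¬ LinearIndependent ℝ ![a, b, c]) :
    ⟪a, a⟫ * ⟪b, b⟫ * ⟪c, c⟫ + 2 * (⟪a, b⟫ * ⟪b, c⟫ * ⟪c, a⟫)
      - ⟪a, a⟫ * ⟪b, c⟫ ^ 2 - ⟪b, b⟫ * ⟪c, a⟫ ^ 2 - ⟪c, c⟫ * ⟪a, b⟫ ^ 2 = 0 := by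
  have hdet := not_not.mp (Matrix.det_gram_ne_zero_iff_linearIndependent.not.mpr h)
  simp only [Matrix.det_fin_three, Matrix.gram_apply, Matrix.cons_val_zero, Matrix.cons_val_one,
    Matrix.cons_val_two, Matrix.head_cons, Matrix.tail_cons] at hdet
  rw [real_inner_comm a b, real_inner_comm b c, real_inner_comm c a] at hdet
  linear_combination hdet

theorem sq_mul_prod_norm_two_smul_sub_sq_sub_sq {a b c : V} {R : ℝ}
    (ha : ‖a‖ = R) (hb : ‖b‖ = R) (hc : ‖c‖ = R) (h : ¬ LinearIndependent ℝ ![a, b, c]) :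
    R ^ 2 * ((‖(2 : ℝ) • a - (a + b + c)‖ ^ 2 - R ^ 2) * (‖(2 : ℝ) • b - (a + b + c)‖ ^ 2 - R ^ 2)
        * (‖(2 : ℝ) • c - (a + b + c)‖ ^ 2 - R ^ 2)) =
      -(‖a + b + c‖ ^ 2 - R ^ 2) * (‖a - b‖ ^ 2 * ‖b - c‖ ^ 2 * ‖c - a‖ ^ 2) := by
  have hgram := det_gram_fin_three_eq_zero_of_not_linearIndependent h
  rw [real_inner_self_eq_norm_sq, real_inner_self_eq_norm_sq, real_inner_self_eq_norm_sq,
    ha, hb, hc] at hgram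
  simp only [← real_inner_self_eq_norm_sq, inner_add_left, inner_add_right, inner_sub_left,
    inner_sub_right, real_inner_smul_left, real_inner_smul_right, real_inner_comm a b,
    real_inner_comm b c, real_inner_comm c a]
  rw [real_inner_self_eq_norm_sq, real_inner_self_eq_norm_sq, real_inner_self_eq_norm_sq,
    ha, hb, hc]
  linear_combination (24 * R ^ 2 - 8 * (⟪a, b⟫ + ⟪b, c⟫ + ⟪c, a⟫)) * hgram

theorem exists_norm_two_smul_sub_lt_of_lt_norm_add {a b c : V} {R : ℝ}
    (ha : ‖a‖ = R) (hb : ‖b‖ = R) (hc : ‖c‖ = R) (h : ¬ LinearIndependent ℝ ![a, b, c])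
    (hab : a ≠ b) (hbc : b ≠ c) (hca : c ≠ a) (hR : R < ‖a + b + c‖) :
    ∃ x ∈ ({a, b, c} : Set V), ‖(2 : ℝ) • x - (a + b + c)‖ < R := by
  have hR₀ : 0 ≤ R := ha ▸ norm_nonneg a
  have hsides : 0 < ‖a - b‖ ^ 2 * ‖b - c‖ ^ 2 * ‖c - a‖ ^ 2 := by
    have := norm_pos_iff.mpr (sub_ne_zero.mpr hab)
    have := norm_pos_iff.mpr (sub_ne_zero.mpr hbc)
    have := norm_pos_iff.mpr (sub_ne_zero.mpr hca)
    positivity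
  have hneg : R ^ 2 * ((‖(2 : ℝ) • a - (a + b + c)‖ ^ 2 - R ^ 2)
      * (‖(2 : ℝ) • b - (a + b + c)‖ ^ 2 - R ^ 2)
      * (‖(2 : ℝ) • c - (a + b + c)‖ ^ 2 - R ^ 2)) < 0 := by
    rw [sq_mul_prod_norm_two_smul_sub_sq_sub_sq ha hb hc h]
    have : R ^ 2 < ‖a + b + c‖ ^ 2 := by gcongr
    nlinarith
  by_contra! hfar
  have hfactor : ∀ x ∈ ({a, b, c} : Set V), 0 ≤ ‖(2 : ℝ) • x - (a + b + c)‖ ^ 2 - R ^ 2 :=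
    fun x hx ↦ sub_nonneg.mpr (by gcongr; exact hfar x hx)
  refine hneg.not_ge (mul_nonneg (sq_nonneg R) (mul_nonneg (mul_nonneg ?_ ?_) ?_)) <;>
    exact hfactor _ (by simp)

end InnerProduct

section Affine

variable {V P : Type*} [NormedAddCommGroup V] [NormedSpace ℝ V] [MetricSpace P]
  [NormedAddTorsor V P]

theorem dist_midpoint_eq_norm_two_smul_vsub_sub_div_two (O H X : P) :
    dist (midpoint ℝ O H) X = ‖(2 : ℝ) • (X -ᵥ O) - (H -ᵥ O)‖ / 2 := by
  have htwice : X -ᵥ O - (2 : ℝ)⁻¹ • (H -ᵥ O) = (2 : ℝ)⁻¹ • ((2 : ℝ) • (X -ᵥ O) - (H -ᵥ O)) := by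
    module
  rw [dist_comm, dist_eq_norm_vsub V, ← vsub_sub_vsub_cancel_right X _ O, midpoint_vsub_left,
    invOf_eq_inv, htwice, norm_smul, norm_inv, Real.norm_two, inv_mul_eq_div]

end Affine

/-- If the nine-point center of a nondegenerate triangle is at distance greater than `R/2`
from its circumcenter, then at least one vertex of the triangle lies strictly inside the
Euler circle. -/
theorem exists_vertex_mem_interior_euler_circle
    (A B C : EuclideanSpace ℝ (Fin 2)) (h : AffineIndependent ℝ ![A, B, C]) :
    let T : Affine.Triangle ℝ (EuclideanSpace ℝ (Fin 2)) := ⟨![A, B, C], h⟩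
    let O := T.circumcenter
    let R := T.circumradius
    let H := T.orthocenter
    let N := midpoint ℝ O H
    R / 2 < dist O N → ∃ X ∈ ({A, B, C} : Set (EuclideanSpace ℝ (Fin 2))), dist N X < R / 2 := by
  intro T O R H N hlt
  have hvertex (i : Fin 3) : ‖T.points i -ᵥ O‖ = R := by
    rw [← dist_eq_norm_vsub]; exact T.dist_circumcenter_eq_circumradius i
  have hH : H -ᵥ O = (A -ᵥ O) + (B -ᵥ O) + (C -ᵥ O) := by
    rw [T.orthocenter_vsub_circumcenter_eq_sum_vsub, Fin.sum_univ_three]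
    rfl
  have hdep : ¬ LinearIndependent ℝ ![A -ᵥ O, B -ᵥ O, C -ᵥ O] := fun hli ↦ by
    simpa using hli.fintype_card_le_finrank
  have hne (i j : Fin 3) (hij : i ≠ j) : T.points i -ᵥ O ≠ T.points j -ᵥ O :=
    fun he ↦ hij (h.injective (vsub_left_cancel he))
  have hON : R < ‖(A -ᵥ O) + (B -ᵥ O) + (C -ᵥ O)‖ := by
    have hdist : dist O N = ‖H -ᵥ O‖ / 2 := by
      rw [dist_comm, dist_midpoint_eq_norm_two_smul_vsub_sub_div_two, vsub_self, smul_zero,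
        zero_sub, norm_neg]
    rw [hdist, hH] at hlt
    linarith
  obtain ⟨x, hx, hlt⟩ := exists_norm_two_smul_sub_lt_of_lt_norm_add
    (a := A -ᵥ O) (b := B -ᵥ O) (c := C -ᵥ O) (hvertex 0) (hvertex 1)
    (hvertex 2) hdep (hne 0 1 (by decide)) (hne 1 2 (by decide))
    (hne 2 0 (by decide)) hON
  obtain ⟨X, hX, rfl⟩ : x ∈ (· -ᵥ O) '' {A, B, C} := by
    rw [Set.image_insert_eq, Set.image_pair]
    exact hx
  refine ⟨X, hX, ?_⟩
  beta_reduce at hlt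
  rw [dist_midpoint_eq_norm_two_smul_vsub_sub_div_two, hH]
  linarith
end

section
/- Let O and N be points in the Euclidean plane and R > 0 with dist(O,N) < R/2. Then there exist infinitely many nondegenerate triangles ABC with circumcenter O, circumradius R, and nine-point center N (i.e., with dist(O,A) = dist(O,B) = dist(O,C) = R and midpoint(O, orthocenter(ABC)) = N); moreover, every such triangle is acute (all its angles are strictly less than π/2). -/
/-!
Put the circumcenter at the origin and write `a, b, c` for the vertices, so `‖a‖ = ‖b‖ = ‖c‖ = R`.
By Sylvester's theorem `H - O = a + b + c`, so the nine-point center is `N` exactly when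
`a + b + c = v := 2 (N - O)`, a vector with `‖v‖ < R`.

Acuteness: `⟪b - a, c - a⟫ = 2R² + ⟪b, c⟫ - ⟪a, v⟫ > 2R² - R² - R² = 0`, and likewise at `b`, `c`.

Existence: for any `a` on the circle, `‖v - a‖ < 2R`, so `v - a` is twice the midpoint of a chord
`bc` of the circle (perpendicular to `v - a`). The acuteness computation shows `a, b, c` are
distinct, hence a triangle. Each triangle arises from at most three choices of `a`, and the
circle is infinite.
-/

open EuclideanGeometry Real
open scoped RealInnerProductSpace

theorem Set.Infinite.image_of_mem_of_finite {α : Type*} {s : Set α} (hs : s.Infinite)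
    {f : α → Set α} (hmem : ∀ x ∈ s, x ∈ f x) (hfin : ∀ x ∈ s, (f x).Finite) :
    (f '' s).Infinite := fun hfin' ↦
  hs <| (hfin'.sUnion (by rintro _ ⟨x, hx, rfl⟩; exact hfin x hx)).subset
    fun x hx ↦ ⟨f x, ⟨x, hx, rfl⟩, hmem x hx⟩

section Normed

variable {E : Type*} [NormedAddCommGroup E] [NormedSpace ℝ E]

theorem Metric.sphere_infinite (h : 1 < Module.rank ℝ E) (x : E) {r : ℝ} (hr : 0 < r) :
    (Metric.sphere x r).Infinite := by
  have : Nontrivial E := (rank_pos_iff_nontrivial (R := ℝ)).1 (zero_lt_one.trans h)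
  refine (isPreconnected_sphere h x r).infinite_of_nontrivial ?_
  obtain ⟨p, hp⟩ := (NormedSpace.sphere_nonempty (x := x)).2 hr.le
  have hpx : p - x ≠ 0 := by
    rw [Metric.mem_sphere, dist_eq_norm] at hp
    exact norm_ne_zero_iff.1 (hp ▸ hr.ne')
  refine ⟨p, hp, x - (p - x), ?_, fun h ↦ hpx ?_⟩
  · rw [Metric.mem_sphere, dist_eq_norm] at hp ⊢
    rwa [sub_sub_cancel_left, norm_neg]
  · linear_combination (norm := module) (1 / 2 : ℝ) • h

end Normed

section Inner

variable {E : Type*} [NormedAddCommGroup E] [InnerProductSpace ℝ E]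

open InnerProductGeometry in
theorem InnerProductGeometry.angle_lt_pi_div_two_of_inner_pos {x y : E} (h : 0 < ⟪x, y⟫) :
    angle x y < π / 2 := by
  have hx : x ≠ 0 := by rintro rfl; simp at h
  have hy : y ≠ 0 := by rintro rfl; simp at h
  exact arccos_lt_pi_div_two.2 (div_pos h (by positivity))

theorem exists_ne_zero_inner_eq_zero (h : 1 < Module.rank ℝ E) (m : E) :
    ∃ u : E, u ≠ 0 ∧ ⟪m, u⟫ = 0 := by
  by_contra! H
  have hinj : Function.Injective (innerₛₗ ℝ m) := by
    rw [← LinearMap.ker_eq_bot, Submodule.eq_bot_iff]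
    exact fun u hu ↦ by_contra fun hu0 ↦ H u hu0 hu
  have := LinearMap.lift_rank_le_of_injective _ hinj
  rw [Module.rank_self, Cardinal.lift_one, Cardinal.lift_le_one_iff] at this
  exact h.not_ge this

theorem exists_norm_eq_add_eq_two_smul (h : 1 < Module.rank ℝ E) {m : E} {R : ℝ}
    (hm : ‖m‖ ≤ R) : ∃ b c : E, ‖b‖ = R ∧ ‖c‖ = R ∧ b + c = (2 : ℝ) • m := by
  obtain ⟨u, hu0, hmu⟩ := exists_ne_zero_inner_eq_zero h m
  have hR : 0 ≤ R := (norm_nonneg m).trans hm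
  set w := (√(R ^ 2 - ‖m‖ ^ 2) / ‖u‖) • u
  have hw : ‖w‖ ^ 2 = R ^ 2 - ‖m‖ ^ 2 := by
    rw [norm_smul, norm_div, norm_norm, div_mul_cancel₀ _ (norm_ne_zero_iff.2 hu0),
      Real.norm_of_nonneg (sqrt_nonneg _), sq_sqrt (by nlinarith [norm_nonneg m])]
  have hmw : ⟪m, w⟫ = 0 := by rw [inner_smul_right, hmu, mul_zero]
  have pythagoras : ∀ w' : E, ⟪m, w'⟫ = 0 → ‖w'‖ ^ 2 = R ^ 2 - ‖m‖ ^ 2 → ‖m + w'‖ = R :=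
    fun w' hmw' hw' ↦ (sq_eq_sq₀ (norm_nonneg _) hR).1 <| by
      rw [sq, norm_add_sq_eq_norm_sq_add_norm_sq_real hmw', ← sq, ← sq, hw']; ring
  exact ⟨m + w, m + -w, pythagoras w hmw hw, pythagoras (-w) (by simp [hmw]) (by simp [hw]),
    by module⟩

theorem inner_sub_sub_pos_of_norm_add_add_lt {a b c : E} {R : ℝ} (ha : ‖a‖ = R) (hb : ‖b‖ = R)
    (hc : ‖c‖ = R) (h : ‖a + b + c‖ < R) : 0 < ⟪b - a, c - a⟫ := by
  have hbc : -R ^ 2 ≤ ⟪b, c⟫ := by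
    have := abs_real_inner_le_norm b c
    rw [hb, hc] at this
    nlinarith [neg_abs_le ⟪b, c⟫]
  have ha_sum : ⟪a, a + b + c⟫ < R ^ 2 := by
    have := real_inner_le_norm a (a + b + c)
    nlinarith [norm_nonneg (a + b + c)]
  have haa : ⟪a, a⟫ = R ^ 2 := by rw [real_inner_self_eq_norm_sq, ha]
  simp only [inner_sub_left, inner_sub_right, inner_add_right] at ha_sum ⊢
  rw [real_inner_comm a b]
  linarith

end Inner

section Affine

variable {V P : Type*} [NormedAddCommGroup V] [InnerProductSpace ℝ V] [MetricSpace P]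
  [NormedAddTorsor V P]

theorem exists_dist_eq_vsub_add_vsub_add_vsub_eq (h : 1 < Module.rank ℝ V) {O A : P} {R : ℝ}
    {v : V} (hA : dist A O = R) (hv : ‖v‖ ≤ R) :
    ∃ B C : P, dist B O = R ∧ dist C O = R ∧ (A -ᵥ O) + (B -ᵥ O) + (C -ᵥ O) = v := by
  have hm : ‖(2 : ℝ)⁻¹ • (v - (A -ᵥ O))‖ ≤ R := by
    rw [norm_smul, Real.norm_of_nonneg (by norm_num)]
    have := norm_sub_le v (A -ᵥ O)
    rw [← dist_eq_norm_vsub, hA] at this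
    linarith
  obtain ⟨b, c, hb, hc, hbc⟩ := exists_norm_eq_add_eq_two_smul h hm
  refine ⟨b +ᵥ O, c +ᵥ O, by rwa [dist_vadd_left], by rwa [dist_vadd_left], ?_⟩
  rw [vadd_vsub, vadd_vsub, add_assoc, hbc]
  module

theorem angle_lt_pi_div_two_of_norm_vsub_add_lt {A B C O : P} {R : ℝ} (hA : dist A O = R)
    (hB : dist B O = R) (hC : dist C O = R) (h : ‖(A -ᵥ O) + (B -ᵥ O) + (C -ᵥ O)‖ < R) :
    ∠ B A C < π / 2 := by
  rw [EuclideanGeometry.angle, ← vsub_sub_vsub_cancel_right B A O,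
    ← vsub_sub_vsub_cancel_right C A O]
  rw [dist_eq_norm_vsub V] at hA hB hC
  exact InnerProductGeometry.angle_lt_pi_div_two_of_inner_pos
    (inner_sub_sub_pos_of_norm_add_add_lt hA hB hC h)

theorem angles_lt_pi_div_two_of_norm_vsub_add_lt {A B C O : P} {R : ℝ} (hA : dist A O = R)
    (hB : dist B O = R) (hC : dist C O = R) (h : ‖(A -ᵥ O) + (B -ᵥ O) + (C -ᵥ O)‖ < R) :
    ∠ B A C < π / 2 ∧ ∠ A B C < π / 2 ∧ ∠ B C A < π / 2 := by
  refine ⟨angle_lt_pi_div_two_of_norm_vsub_add_lt hA hB hC h,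
    angle_lt_pi_div_two_of_norm_vsub_add_lt hB hA hC ?_,
    angle_lt_pi_div_two_of_norm_vsub_add_lt hC hB hA ?_⟩ <;>
  convert h using 2 <;> abel

theorem affineIndependent_of_norm_vsub_add_lt {A B C O : P} {R : ℝ} (hA : dist A O = R)
    (hB : dist B O = R) (hC : dist C O = R) (h : ‖(A -ᵥ O) + (B -ᵥ O) + (C -ᵥ O)‖ < R) :
    AffineIndependent ℝ ![A, B, C] := by
  obtain ⟨hA', hB', -⟩ := angles_lt_pi_div_two_of_norm_vsub_add_lt hA hB hC h
  have hcosph : Cospherical ({A, B, C} : Set P) :=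
    ⟨O, R, by rintro p (rfl | rfl | rfl) <;> assumption⟩
  -- A repeated vertex gives a degenerate angle, which is `π / 2` by convention.
  refine hcosph.affineIndependent_of_ne ?_ ?_ ?_ <;> rintro rfl <;> simp_all

theorem Affine.Triangle.orthocenter_vsub_eq_sum_vsub_of_dist_eq [FiniteDimensional ℝ V]
    (hV : Module.finrank ℝ V = 2) (t : Affine.Triangle ℝ P) {O : P} {R : ℝ}
    (hO : ∀ i, dist (t.points i) O = R) :
    t.orthocenter -ᵥ O = ∑ i, (t.points i -ᵥ O) := by
  obtain rfl : O = t.circumcenter :=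
    t.eq_circumcenter_of_dist_eq (by
      rw [t.independent.affineSpan_eq_top_iff_card_eq_finrank_add_one.2 (by simp [hV])]
      trivial) hO
  exact t.orthocenter_vsub_circumcenter_eq_sum_vsub

theorem midpoint_eq_iff_vsub_eq_two_smul {O H N : P} :
    midpoint ℝ O H = N ↔ H -ᵥ O = (2 : ℝ) • (N -ᵥ O) := by
  rw [← vsub_left_cancel_iff (p := O), midpoint_vsub_left, invOf_eq_inv,
    inv_smul_eq_iff₀ two_ne_zero]

theorem midpoint_orthocenter_eq_iff [FiniteDimensional ℝ V] (hV : Module.finrank ℝ V = 2)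
    {A B C O N : P} (h : AffineIndependent ℝ ![A, B, C]) {R : ℝ} (hA : dist A O = R)
    (hB : dist B O = R) (hC : dist C O = R) :
    midpoint ℝ O (Affine.Triangle.orthocenter ⟨![A, B, C], h⟩) = N ↔
      (A -ᵥ O) + (B -ᵥ O) + (C -ᵥ O) = (2 : ℝ) • (N -ᵥ O) := by
  rw [midpoint_eq_iff_vsub_eq_two_smul,
    Affine.Triangle.orthocenter_vsub_eq_sum_vsub_of_dist_eq hV _ (R := R) ?_, Fin.sum_univ_three]
  · rfl
  · intro i; fin_cases i <;> assumption

end Affine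

/-- If `dist O N < R/2`, there are infinitely many (unordered) triangles with circumcenter
`O`, circumradius `R` and nine-point center `N`, and every such triangle is acute. -/
theorem infinite_triangles_sharing_circumcircle_euler_circle_acute
    (O N : EuclideanSpace ℝ (Fin 2)) (R : ℝ) (hR : 0 < R) (hd : dist O N < R / 2) :
    {s : Set (EuclideanSpace ℝ (Fin 2)) |
        ∃ (A B C : EuclideanSpace ℝ (Fin 2)) (h : AffineIndependent ℝ ![A, B, C]),
          s = {A, B, C} ∧ dist O A = R ∧ dist O B = R ∧ dist O C = R ∧
            midpoint ℝ O (Affine.Triangle.orthocenter ⟨![A, B, C], h⟩) = N}.Infinite ∧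
      ∀ (A B C : EuclideanSpace ℝ (Fin 2)) (h : AffineIndependent ℝ ![A, B, C]),
        dist O A = R → dist O B = R → dist O C = R →
        midpoint ℝ O (Affine.Triangle.orthocenter ⟨![A, B, C], h⟩) = N →
        ∠ B A C < π / 2 ∧ ∠ A B C < π / 2 ∧ ∠ B C A < π / 2 := by
  have hV : Module.finrank ℝ (EuclideanSpace ℝ (Fin 2)) = 2 := finrank_euclideanSpace_fin
  have hrank : 1 < Module.rank ℝ (EuclideanSpace ℝ (Fin 2)) := by
    rw [← Module.finrank_eq_rank, hV]; norm_num
  have hv : ‖(2 : ℝ) • (N -ᵥ O)‖ < R := by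
    rw [norm_smul, Real.norm_two, ← dist_eq_norm_vsub, dist_comm]; linarith
  refine ⟨?_, fun A B C h hA hB hC hN ↦ ?_⟩
  · choose! Q S hQ hS hsum using fun P (hP : P ∈ Metric.sphere O R) ↦
      exists_dist_eq_vsub_add_vsub_add_vsub_eq hrank hP hv.le
    refine ((Metric.sphere_infinite hrank O hR).image_of_mem_of_finite
      (f := fun P ↦ {P, Q P, S P}) (fun P _ ↦ Set.mem_insert _ _)
      (fun P _ ↦ Set.toFinite _)).mono ?_
    rintro _ ⟨P, hP, rfl⟩
    have hsum' : ‖(P -ᵥ O) + (Q P -ᵥ O) + (S P -ᵥ O)‖ < R := hsum P hP ▸ hv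
    have hind := affineIndependent_of_norm_vsub_add_lt hP (hQ P hP) (hS P hP) hsum'
    refine ⟨P, Q P, S P, hind, rfl, dist_comm P O ▸ hP, dist_comm (Q P) O ▸ hQ P hP,
      dist_comm (S P) O ▸ hS P hP, ?_⟩
    exact (midpoint_orthocenter_eq_iff hV hind hP (hQ P hP) (hS P hP)).2 (hsum P hP)
  · rw [dist_comm] at hA hB hC
    rw [midpoint_orthocenter_eq_iff hV h hA hB hC] at hN
    exact angles_lt_pi_div_two_of_norm_vsub_add_lt hA hB hC (hN ▸ hv)
end

section
/- Let ABC be a nondegenerate triangle in the Euclidean plane with circumcenter O and circumradius R, and let N be a point equidistant from the three side midpoints: dist(N, midpoint(A,B)) = dist(N, midpoint(B,C)) = dist(N, midpoint(C,A)). Then N is the nine-point center of the triangle, N = midpoint(O, orthocenter(ABC)), and the common distance equals R/2. In particular, a triangle inscribed in the circle of center O and radius R whose side midpoints lie on the circle of center N and radius R/2 has Euler circle exactly that circle. -/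
open EuclideanGeometry Real

/-- A point equidistant from the three side midpoints of a nondegenerate triangle is the
nine-point center, and the common distance is half the circumradius. -/
theorem eq_ninePointCenter_of_equidistant_from_side_midpoints
    (A B C : EuclideanSpace ℝ (Fin 2)) (h : AffineIndependent ℝ ![A, B, C])
    (T : Affine.Triangle ℝ (EuclideanSpace ℝ (Fin 2))) (hT : T = ⟨![A, B, C], h⟩)
    (N : EuclideanSpace ℝ (Fin 2))
    (h₁ : dist N (midpoint ℝ A B) = dist N (midpoint ℝ B C))
    (h₂ : dist N (midpoint ℝ B C) = dist N (midpoint ℝ C A)) :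
    N = midpoint ℝ T.circumcenter T.orthocenter ∧
      dist N (midpoint ℝ A B) = T.circumradius / 2 := by
  subst hT
  set T : Affine.Triangle ℝ (EuclideanSpace ℝ (Fin 2)) := ⟨![A, B, C], h⟩ with hT
  set O := T.circumcenter with hO
  set R := T.circumradius with hR
  set N₀ := midpoint ℝ O T.orthocenter with hN₀
  -- distances from circumcenter
  have hdA : dist O A = R := by
    have := T.dist_circumcenter_eq_circumradius' 0
    simpa [hT] using this
  have hdB : dist O B = R := by
    have := T.dist_circumcenter_eq_circumradius' 1
    simpa [hT] using this
  have hdC : dist O C = R := by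
    have := T.dist_circumcenter_eq_circumradius' 2
    simpa [hT] using this
  -- centroid
  have hG : (Finset.univ : Finset (Fin 3)).centroid ℝ T.points
      = (3 : ℝ)⁻¹ • (A + B + C) := by
    rw [Finset.centroid_def,
      Finset.affineCombination_eq_linear_combination _ _ _ (by simp [Finset.centroidWeights])]
    simp [hT, Finset.centroidWeights, Fin.sum_univ_three, smul_add]
  -- orthocenter position
  have hH : T.orthocenter = (3 : ℝ) • ((3 : ℝ)⁻¹ • (A + B + C) - O) + O := by
    have := T.orthocenter_eq_smul_vsub_vadd_circumcenter
    rw [hG] at this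
    simpa [vsub_eq_sub, vadd_eq_add] using this
  have hN₀' : N₀ = (2 : ℝ)⁻¹ • (A + B + C) - (2 : ℝ)⁻¹ • O := by
    rw [hN₀, hH, midpoint_eq_smul_add, invOf_eq_inv]
    module
  -- distances from N₀ to the three midpoints
  have key : ∀ X Y Z : EuclideanSpace ℝ (Fin 2),
      (2 : ℝ)⁻¹ • (X + Y + Z) - (2 : ℝ)⁻¹ • O - midpoint ℝ X Y = (2 : ℝ)⁻¹ • (Z - O) := by
    intro X Y Z
    rw [midpoint_eq_smul_add, invOf_eq_inv]
    module
  have distN₀ : ∀ X Y Z : EuclideanSpace ℝ (Fin 2), dist O Z = R →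
      (2 : ℝ)⁻¹ • (X + Y + Z) - (2 : ℝ)⁻¹ • O = N₀ →
      dist N₀ (midpoint ℝ X Y) = R / 2 := by
    intro X Y Z hZ hXYZ
    rw [dist_eq_norm, ← hXYZ, key X Y Z, norm_smul]
    rw [dist_eq_norm] at hZ
    have hn : ‖Z - O‖ = R := by rwa [← neg_sub, norm_neg] at hZ
    rw [hn]
    norm_num
    try ring
  have hab : dist N₀ (midpoint ℝ A B) = R / 2 :=
    distN₀ A B C hdC (by rw [hN₀']; try module)
  have hbc : dist N₀ (midpoint ℝ B C) = R / 2 :=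
    distN₀ B C A hdA (by rw [hN₀']; try module)
  have hca : dist N₀ (midpoint ℝ C A) = R / 2 :=
    distN₀ C A B hdB (by rw [hN₀']; try module)
  -- the medial triangle
  have hmid : (AffineMap.homothety ((3 : ℝ)⁻¹ • (A + B + C)) (-(2 : ℝ)⁻¹))
      ∘ (![A, B, C] ∘ ![2, 0, 1])
      = ![midpoint ℝ A B, midpoint ℝ B C, midpoint ℝ C A] := by
    have e0 : AffineMap.homothety ((3 : ℝ)⁻¹ • (A + B + C)) (-(2 : ℝ)⁻¹) C
        = midpoint ℝ A B := by
      rw [AffineMap.homothety_apply, midpoint_eq_smul_add, invOf_eq_inv]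
      simp only [vsub_eq_sub, vadd_eq_add]
      module
    have e1 : AffineMap.homothety ((3 : ℝ)⁻¹ • (A + B + C)) (-(2 : ℝ)⁻¹) A
        = midpoint ℝ B C := by
      rw [AffineMap.homothety_apply, midpoint_eq_smul_add, invOf_eq_inv]
      simp only [vsub_eq_sub, vadd_eq_add]
      module
    have e2 : AffineMap.homothety ((3 : ℝ)⁻¹ • (A + B + C)) (-(2 : ℝ)⁻¹) B
        = midpoint ℝ C A := by
      rw [AffineMap.homothety_apply, midpoint_eq_smul_add, invOf_eq_inv]
      simp only [vsub_eq_sub, vadd_eq_add]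
      module
    funext i
    fin_cases i
    · exact e0
    · exact e1
    · exact e2
  have hinj : Function.Injective (AffineMap.homothety ((3 : ℝ)⁻¹ • (A + B + C)) (-(2 : ℝ)⁻¹) :
      EuclideanSpace ℝ (Fin 2) →ᵃ[ℝ] EuclideanSpace ℝ (Fin 2)) := by
    intro x y hxy
    simp only [AffineMap.homothety_apply, vsub_eq_sub, vadd_eq_add] at hxy
    have h1 := add_right_cancel hxy
    have h2 := smul_right_injective (EuclideanSpace ℝ (Fin 2)) (by norm_num :
      (-(2 : ℝ)⁻¹) ≠ 0) h1
    exact sub_left_injective h2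
  have hperm : AffineIndependent ℝ (![A, B, C] ∘ ![(2 : Fin 3), 0, 1]) :=
    h.comp_embedding ⟨![2, 0, 1], by decide⟩
  have hmedind : AffineIndependent ℝ ![midpoint ℝ A B, midpoint ℝ B C, midpoint ℝ C A] := by
    rw [← hmid]
    exact hperm.map' _ hinj
  set S : Affine.Triangle ℝ (EuclideanSpace ℝ (Fin 2)) :=
    ⟨![midpoint ℝ A B, midpoint ℝ B C, midpoint ℝ C A], hmedind⟩ with hS
  have hspan : affineSpan ℝ (Set.range S.points) = ⊤ :=
    S.span_eq_top (by simp)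
  have hNS : N = S.circumcenter := by
    refine S.eq_circumcenter_of_dist_eq (by rw [hspan]; trivial)
      (r := dist N (midpoint ℝ A B)) ?_
    intro i
    fin_cases i
    · show dist (midpoint ℝ A B) N = _
      rw [dist_comm]
    · show dist (midpoint ℝ B C) N = _
      rw [dist_comm, ← h₁]
    · show dist (midpoint ℝ C A) N = _
      rw [dist_comm, ← h₂, ← h₁]
  have hN₀S : N₀ = S.circumcenter := by
    refine S.eq_circumcenter_of_dist_eq (by rw [hspan]; trivial) (r := R / 2) ?_
    intro i
    fin_cases i
    · show dist (midpoint ℝ A B) N₀ = _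
      rw [dist_comm]; exact hab
    · show dist (midpoint ℝ B C) N₀ = _
      rw [dist_comm]; exact hbc
    · show dist (midpoint ℝ C A) N₀ = _
      rw [dist_comm]; exact hca
  have hNN₀ : N = N₀ := by rw [hNS, hN₀S]
  exact ⟨hNN₀, by rw [hNN₀]; exact hab⟩
end

section
/- Let ABC be a nondegenerate triangle in the Euclidean plane with no right angle, with circumcenter O, circumradius R, and nine-point center N = midpoint(O, orthocenter). Define the poles A' = inversion O R (midpoint(B,C)), B' = inversion O R (midpoint(C,A)), C' = inversion O R (midpoint(A,B)). Then the image of the Euler circle under inversion in the circumcircle is a circle through the three poles: there exist a point N' and a real R' > 0 such that the image of {X : dist(N,X) = R/2} under inversion O R equals {X : dist(N',X) = R'}, and A', B', C' all lie on this circle. -/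
/-!
An inversion about `c` maps a circle not through `c` to a circle: with `k = R² / (|c - y|² - r²)`,
the image `x'` of `x` satisfies `|x' - y'|² - (k r)² = (k R² / |x - c|²) (|x - y|² - r²)`, where
`y' = c + k (y - c)`. The Euler circle passes through the side midpoints, so their inverses lie on
the image circle. It avoids `O` exactly when the orthocenter `H = O + a + b + c` (with `a, b, c` the
vectors from `O` to the vertices) is off the circumcircle. If `|a + b + c| = R`, four times the
Gram determinant of `a, b, c`, which vanishes in the plane, equals `|b + c|² |a + c|² |a + b|²`,
so two vertices are antipodal and Thales gives a right angle.
-/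

open EuclideanGeometry Real RealInnerProductSpace Module

namespace EuclideanGeometry

variable {V P : Type*} [NormedAddCommGroup V] [InnerProductSpace ℝ V] [MetricSpace P]
  [NormedAddTorsor V P] {c x y : P} {R r k : ℝ}

theorem dist_inversion_sq_sub_sq (hk : k * (dist c y ^ 2 - r ^ 2) = R ^ 2) (hx : x ≠ c) :
    dist (inversion c R x) (k • (y -ᵥ c) +ᵥ c) ^ 2 - (k * r) ^ 2 =
      k * R ^ 2 / dist x c ^ 2 * (dist x y ^ 2 - r ^ 2) := by
  have hxc : ‖x -ᵥ c‖ ≠ 0 := by rwa [← dist_eq_norm_vsub, dist_ne_zero]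
  rw [dist_comm, dist_eq_norm_vsub V y] at hk
  rw [dist_eq_norm_vsub V (inversion c R x), vsub_vadd_eq_vsub_sub, inversion_vsub_center,
    dist_eq_norm_vsub V x y, ← vsub_sub_vsub_cancel_right x y c, dist_eq_norm_vsub V x c,
    norm_sub_sq_real, norm_sub_sq_real, norm_smul, norm_smul, inner_smul_left,
    inner_smul_right]
  simp only [Real.norm_eq_abs, mul_pow, sq_abs, conj_trivial]
  field_simp
  linear_combination (k * ‖x -ᵥ c‖ ^ 2 - R ^ 2) * hk

theorem inversion_mem_sphere_iff (hR : R ≠ 0) (hr : 0 ≤ r)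
    (hk : k * (dist c y ^ 2 - r ^ 2) = R ^ 2) (hx : x ≠ c) :
    inversion c R x ∈ Metric.sphere (k • (y -ᵥ c) +ᵥ c) (|k| * r) ↔ x ∈ Metric.sphere y r := by
  have hk0 : k ≠ 0 := by rintro rfl; simp [eq_comm, hR] at hk
  have hxc : dist x c ≠ 0 := dist_ne_zero.2 hx
  have hscale : k * R ^ 2 / dist x c ^ 2 ≠ 0 := by positivity
  have key := dist_inversion_sq_sub_sq hk hx
  rw [Metric.mem_sphere, Metric.mem_sphere, ← sq_eq_sq₀ dist_nonneg (by positivity),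
    ← sq_eq_sq₀ dist_nonneg hr, mul_pow, sq_abs, ← mul_pow, ← sub_eq_zero, key,
    mul_eq_zero_iff_left hscale, sub_eq_zero]

theorem dist_sq_sub_sq_ne_zero_of_notMem_sphere (hr : 0 ≤ r) (hc : c ∉ Metric.sphere y r) :
    dist c y ^ 2 - r ^ 2 ≠ 0 := by
  rwa [sub_ne_zero, Ne, sq_eq_sq₀ dist_nonneg hr, ← Metric.mem_sphere]

theorem image_inversion_sphere (hR : R ≠ 0) (hr : 0 ≤ r) (hc : c ∉ Metric.sphere y r) :
    inversion c R '' Metric.sphere y r =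
      Metric.sphere ((R ^ 2 / (dist c y ^ 2 - r ^ 2)) • (y -ᵥ c) +ᵥ c)
        (|R ^ 2 / (dist c y ^ 2 - r ^ 2)| * r) := by
  set k := R ^ 2 / (dist c y ^ 2 - r ^ 2)
  have hc' := dist_sq_sub_sq_ne_zero_of_notMem_sphere hr hc
  have hk : k * (dist c y ^ 2 - r ^ 2) = R ^ 2 := div_mul_cancel₀ _ hc'
  have hk0 : k ≠ 0 := div_ne_zero (pow_ne_zero 2 hR) hc'
  suffices inversion c R ⁻¹' Metric.sphere (k • (y -ᵥ c) +ᵥ c) (|k| * r) = Metric.sphere y r by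
    rw [← this, Set.image_preimage_eq _ (inversion_surjective c hR)]
  ext x
  rcases eq_or_ne x c with rfl | hx
  · rw [Set.mem_preimage, inversion_self, Metric.mem_sphere, dist_comm, dist_vadd_left, norm_smul,
      Real.norm_eq_abs, ← dist_eq_norm_vsub, dist_comm, mul_right_inj' (abs_ne_zero.2 hk0)]
    exact iff_of_false hc hc
  · exact inversion_mem_sphere_iff hR hr hk hx

end EuclideanGeometry

theorem Matrix.det_gram_eq_zero_of_finrank_lt {𝕜 E ι : Type*} [RCLike 𝕜] [NormedAddCommGroup E]
    [InnerProductSpace 𝕜 E] [FiniteDimensional 𝕜 E] [Fintype ι] [DecidableEq ι] (v : ι → E)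
    (h : finrank 𝕜 E < Fintype.card ι) : (gram 𝕜 v).det = 0 := by
  by_contra hv
  exact h.not_ge (linearIndependent_of_det_gram_ne_zero hv).fintype_card_le_finrank

section Plane

variable {V : Type*} [NormedAddCommGroup V] [InnerProductSpace ℝ V]

theorem add_eq_zero_or_of_norm_add_add_eq (hV : finrank ℝ V = 2) {a b c : V} {r : ℝ}
    (ha : ‖a‖ = r) (hb : ‖b‖ = r) (hc : ‖c‖ = r) (habc : ‖a + b + c‖ = r) :
    b + c = 0 ∨ a + c = 0 ∨ a + b = 0 := by
  have : FiniteDimensional ℝ V := .of_finrank_eq_succ hV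
  have hgram := Matrix.det_gram_eq_zero_of_finrank_lt (𝕜 := ℝ) ![a, b, c] (by simp [hV])
  simp only [Matrix.det_fin_three, Matrix.gram_apply, Matrix.cons_val_zero, Matrix.cons_val_one,
    Matrix.cons_val_two, Matrix.head_cons, Matrix.tail_cons, real_inner_self_eq_norm_sq,
    ha, hb, hc] at hgram
  have hsum : ‖a + b + c‖ ^ 2 = r ^ 2 := by rw [habc]
  rw [norm_add_sq_real, norm_add_sq_real, inner_add_left, ha, hb, hc] at hsum
  have key : ‖b + c‖ ^ 2 * ‖a + c‖ ^ 2 * ‖a + b‖ ^ 2 = 0 := by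
    rw [norm_add_sq_real, norm_add_sq_real, norm_add_sq_real, ha, hb, hc]
    rw [real_inner_comm a b, real_inner_comm a c, real_inner_comm b c] at hgram
    linear_combination 4 * hgram + 2 * r ^ 2 * (r ^ 2 + ⟪a, b⟫ + ⟪a, c⟫ + ⟪b, c⟫) * hsum
  simpa [or_assoc] using key

end Plane

namespace Affine.Triangle

variable {V P : Type*} [NormedAddCommGroup V] [InnerProductSpace ℝ V] [MetricSpace P]
  [NormedAddTorsor V P] (t : Triangle ℝ P)

theorem ninePointCircle_center_eq_midpoint :
    t.ninePointCircle.center = midpoint ℝ t.circumcenter t.orthocenter := by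
  apply vsub_left_cancel (p := t.circumcenter)
  rw [Simplex.ninePointCircle_center, vadd_vsub, midpoint_vsub, vsub_self,
    orthocenter_eq_smul_vsub_vadd_circumcenter, vadd_vsub]
  simp only [Nat.cast_ofNat, smul_zero, zero_add, smul_smul, invOf_eq_inv]
  norm_num

theorem ninePointCircle_radius_eq : t.ninePointCircle.radius = t.circumradius / 2 := by
  simp [Simplex.ninePointCircle_radius]

theorem circumcenter_mem_ninePointCircle_iff :
    t.circumcenter ∈ t.ninePointCircle ↔ t.orthocenter ∈ t.circumsphere := by
  rw [EuclideanGeometry.mem_sphere, EuclideanGeometry.mem_sphere',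
    ninePointCircle_center_eq_midpoint, ninePointCircle_radius_eq, dist_left_midpoint (𝕜 := ℝ),
    Simplex.circumsphere_center, Simplex.circumsphere_radius, Real.norm_ofNat, inv_mul_eq_div,
    div_left_inj' two_ne_zero]

theorem faceOppositeCentroid_eq_midpoint {i₁ i₂ i₃ : Fin 3} (h₁₂ : i₁ ≠ i₂) (h₁₃ : i₁ ≠ i₃)
    (h₂₃ : i₂ ≠ i₃) : t.faceOppositeCentroid i₃ = midpoint ℝ (t.points i₁) (t.points i₂) := by
  have hs : ({i₃}ᶜ : Finset (Fin 3)) = {i₁, i₂} := by decide +revert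
  have hface : t.faceOpposite i₃ = t.face (fs := {i₃}ᶜ) (by rw [hs, Finset.card_pair h₁₂]) := rfl
  rw [Simplex.faceOppositeCentroid, Simplex.centroid, hface, Simplex.face_centroid_eq_centroid, hs,
    Finset.centroid_pair, midpoint, AffineMap.lineMap_apply, invOf_eq_inv]

theorem midpoint_mem_ninePointCircle {i₁ i₂ : Fin 3} (h : i₁ ≠ i₂) :
    midpoint ℝ (t.points i₁) (t.points i₂) ∈ t.ninePointCircle := by
  obtain ⟨i₃, h₁₃, h₂₃⟩ : ∃ i₃, i₁ ≠ i₃ ∧ i₂ ≠ i₃ := by decide +revert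
  rw [← t.faceOppositeCentroid_eq_midpoint h h₁₃ h₂₃]
  exact t.faceOppositeCentroid_mem_ninePointCircle i₃

theorem angle_eq_pi_div_two_of_orthocenter_mem_circumsphere (hV : finrank ℝ V = 2)
    (h : t.orthocenter ∈ t.circumsphere) :
    ∠ (t.points 1) (t.points 0) (t.points 2) = π / 2 ∨
      ∠ (t.points 0) (t.points 1) (t.points 2) = π / 2 ∨
      ∠ (t.points 1) (t.points 2) (t.points 0) = π / 2 := by
  have hnorm (i : Fin 3) : ‖t.points i -ᵥ t.circumcenter‖ = t.circumradius := by
    rw [← dist_eq_norm_vsub, t.dist_circumcenter_eq_circumradius]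
  have hsum : ‖(t.points 0 -ᵥ t.circumcenter) + (t.points 1 -ᵥ t.circumcenter) +
      (t.points 2 -ᵥ t.circumcenter)‖ = t.circumradius := by
    rw [EuclideanGeometry.mem_sphere, Simplex.circumsphere_center, Simplex.circumsphere_radius,
      dist_eq_norm_vsub V, orthocenter_vsub_circumcenter_eq_sum_vsub, Fin.sum_univ_three] at h
    exact h
  have hdiam {i j : Fin 3}
      (hij : (t.points i -ᵥ t.circumcenter) + (t.points j -ᵥ t.circumcenter) = 0) :
      t.circumsphere.IsDiameter (t.points i) (t.points j) := by
    refine ⟨t.mem_circumsphere i, vsub_left_cancel (p := t.circumcenter) ?_⟩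
    rw [midpoint_vsub, Simplex.circumsphere_center, vsub_self, ← smul_add, hij, smul_zero]
  rcases add_eq_zero_or_of_norm_add_add_eq hV (hnorm 0) (hnorm 1) (hnorm 2) hsum with
    h₁₂ | h₀₂ | h₀₁
  · exact .inl ((Sphere.thales_theorem (hdiam h₁₂)).2 (t.mem_circumsphere 0))
  · exact .inr (.inl ((Sphere.thales_theorem (hdiam h₀₂)).2 (t.mem_circumsphere 1)))
  · rw [add_comm] at h₀₁
    exact .inr (.inr ((Sphere.thales_theorem (hdiam h₀₁)).2 (t.mem_circumsphere 2)))

end Affine.Triangle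

/-- For a nondegenerate triangle with no right angle, the image of its Euler circle under
inversion in its circumcircle is a circle passing through the three poles of the sides,
i.e. through the inverses of the three side midpoints. -/
theorem inverse_of_euler_circle_passes_through_poles
    (A B C : EuclideanSpace ℝ (Fin 2)) (h : AffineIndependent ℝ ![A, B, C])
    (hA : ∠ B A C ≠ π / 2) (hB : ∠ A B C ≠ π / 2) (hC : ∠ B C A ≠ π / 2)
    (T : Affine.Triangle ℝ (EuclideanSpace ℝ (Fin 2))) (hT : T = ⟨![A, B, C], h⟩)
    (O N : EuclideanSpace ℝ (Fin 2)) (R : ℝ)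
    (hO : O = T.circumcenter) (hR : R = T.circumradius)
    (hN : N = midpoint ℝ O T.orthocenter)
    (A' B' C' : EuclideanSpace ℝ (Fin 2))
    (hA' : A' = EuclideanGeometry.inversion O R (midpoint ℝ B C))
    (hB' : B' = EuclideanGeometry.inversion O R (midpoint ℝ C A))
    (hC' : C' = EuclideanGeometry.inversion O R (midpoint ℝ A B)) :
    ∃ (N' : EuclideanSpace ℝ (Fin 2)) (R' : ℝ), 0 < R' ∧
      EuclideanGeometry.inversion O R '' {X | dist N X = R / 2} = {X | dist N' X = R'} ∧
      dist N' A' = R' ∧ dist N' B' = R' ∧ dist N' C' = R' := by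
  have hpts : T.points = ![A, B, C] := by rw [hT]
  have hEuler : Metric.sphere N (R / 2) = T.ninePointCircle := by
    rw [hN, hO, hR, ← T.ninePointCircle_center_eq_midpoint, ← T.ninePointCircle_radius_eq]
  have hRpos : 0 < R := hR ▸ T.circumradius_pos
  have hOc : O ∉ Metric.sphere N (R / 2) := by
    rw [hEuler, hO, Sphere.mem_coe, T.circumcenter_mem_ninePointCircle_iff]
    intro hH
    have hright :=
      T.angle_eq_pi_div_two_of_orthocenter_mem_circumsphere finrank_euclideanSpace_fin hH
    simp only [hpts, Matrix.cons_val_zero, Matrix.cons_val_one, Matrix.cons_val_two] at hright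
    rcases hright with h | h | h
    exacts [hA h, hB h, hC h]
  have himage := image_inversion_sphere hRpos.ne' (half_pos hRpos).le hOc
  have hpole {i j : Fin 3} (hij : i ≠ j) :
      inversion O R (midpoint ℝ (T.points i) (T.points j)) ∈
        inversion O R '' Metric.sphere N (R / 2) :=
    Set.mem_image_of_mem _ (hEuler ▸ T.midpoint_mem_ninePointCircle hij)
  simp only [hpts, ← Metric.mem_sphere', Set.ofPred_mem_eq, himage] at hpole ⊢
  refine ⟨_, _, ?_, rfl, hA' ▸ hpole (i := 1) (j := 2) (by decide),
    hB' ▸ hpole (i := 2) (j := 0) (by decide), hC' ▸ hpole (i := 0) (j := 1) (by decide)⟩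
  exact mul_pos (abs_pos.2 (div_ne_zero (pow_ne_zero 2 hRpos.ne')
    (dist_sq_sub_sq_ne_zero_of_notMem_sphere (half_pos hRpos).le hOc))) (half_pos hRpos)
end

section
/- For every real d with 0 ≤ d < 1/2, setting R₁ = 2/(1 − 4d²) and d₁ = 4d/(1 − 4d²), the Euler–Chapple incircle relation (R₁ − 1)² = d₁² + 1 holds; and for every real d with 1/2 < d < 3/2, setting R₂ = 2/(4d² − 1) and d₂ = 4d/(4d² − 1), the Euler–Chapple excircle relation (R₂ + 1)² = d₂² + 1 holds. (Here R₁ (resp. R₂) and d₁ (resp. d₂) are the radius of, and the distance from the origin to the center of, the inverse of the circle of center d and radius 1/2 with respect to the unit circle; the relations say that this inverse circle and the unit circle form the circumcircle–incircle, respectively circumcircle–excircle, pair of a poristic family of triangles.) -/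
/-- The inverse of the circle of center `d` and radius `1/2` with respect to the unit circle
satisfies the Euler–Chapple incircle relation when `0 ≤ d < 1/2`, and the Euler–Chapple
excircle relation when `1/2 < d < 3/2`. -/
theorem euler_chapple_relations_for_inverse_of_euler_circle :
    (∀ d : ℝ, 0 ≤ d → d < 1 / 2 →
        (2 / (1 - 4 * d ^ 2) - 1) ^ 2 = (4 * d / (1 - 4 * d ^ 2)) ^ 2 + 1) ∧
      ∀ d : ℝ, 1 / 2 < d → d < 3 / 2 →
        (2 / (4 * d ^ 2 - 1) + 1) ^ 2 = (4 * d / (4 * d ^ 2 - 1)) ^ 2 + 1 := by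
  constructor
  · intro d h0 h1
    have hne : 1 - 4 * d ^ 2 ≠ 0 := by nlinarith
    field_simp
    ring
  · intro d h0 h1
    have hne : 4 * d ^ 2 - 1 ≠ 0 := by nlinarith
    field_simp
    ring
end
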